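/- arXiv:1403.6242 — 5 statements merged into one kernel-verified Lean document; each statement's English description precedes it below -/
import Mathlib

section
/- There is a universal constant c>0 with the following property. Let H,L>0, j∈{1,2}, u∈M, α∈(0,1), ε>0, and write E_j = E_j^ε[u,Ω]. For any λ∈(0,min{L,H}] there exist s∈[0,H−λ] and s'∈[0,L−λ], with stripes S = (0,L)×(s,s+λ) ⊂ Ω and S' = (s',s'+λ)×(0,H) ⊂ Ω, such that: E_j^ε[u,S] ≤ c(λ/H)E_j, E_j^ε[u,S'] ≤ c(λ/L)E_j, E_j^ε[u,S∩S'] ≤ c(λ²/(LH))E_j, and ‖∂₁u₂‖_{L¹(S∩S')} ≤ c(λ²/(LH))‖∂₁u₂‖_{L¹(Ω)}. -/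
/-!
Formalization framework for "Energy scaling and branched microstructures in a
model for shape-memory alloys with SO(2) invariance" (Chan–Conti).

Deformations are maps `u : ℝ² → ℝ²` (with `ℝ²` the Euclidean plane).  The
gradient `Du` is the 2×2 matrix of partial derivatives, matrices carry the
Frobenius norm, and the total variation `|D²u|(ω)` of the (matrix-valued)
gradient is defined by duality against C¹ compactly supported test fields.
The admissible class consists of (Lipschitz) deformations whose gradient has
bounded variation and which agree with the identity on `∂Ω`.
-/

open MeasureTheory Set Metric Topology

noncomputable section

attribute [local instance] Matrix.frobeniusNormedAddCommGroup

abbrev M2 : Type := Matrix (Fin 2) (Fin 2) ℝ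
abbrev E2 : Type := EuclideanSpace ℝ (Fin 2)

/-- Coercion from plain functions to `E2`. -/
def toE2 (f : Fin 2 → ℝ) : E2 := WithLp.toLp 2 f

/-- The matrix `F` applied to the point `x ∈ ℝ²`. -/
def mulV (F : M2) (x : E2) : E2 := toE2 (F.mulVec (fun i => x i))

/-- The group `SO(2)` of 2×2 proper rotations. -/
def SO2 : Set M2 := {R | R * R.transpose = 1 ∧ R.det = 1}

/-- The set `K₁ = SO(2)A₁ ∪ SO(2)B₁`, with `A₁ = [[1,-α],[0,1]]`, `B₁ = [[1,α],[0,1]]`. -/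
def K1 (α : ℝ) : Set M2 :=
  ((fun R => R * !![1, -α; 0, 1]) '' SO2) ∪ ((fun R => R * !![1, α; 0, 1]) '' SO2)

/-- The set `K₂ = SO(2)A₂ ∪ SO(2)B₂`, with `A₂ = diag(1,1-α)`, `B₂ = diag(1,1+α)`. -/
def K2 (α : ℝ) : Set M2 :=
  ((fun R => R * !![1, 0; 0, 1 - α]) '' SO2) ∪ ((fun R => R * !![1, 0; 0, 1 + α]) '' SO2)

/-- `K_j` for `j ∈ {1,2}`. -/
def Kj (j : ℕ) (α : ℝ) : Set M2 := if j = 1 then K1 α else K2 α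

/-- Distance (w.r.t. the Frobenius norm) of a matrix to a set of matrices. -/
def distK (K : Set M2) (F : M2) : ℝ := Metric.infDist F K

/-- The gradient `Du(x)` as a 2×2 matrix, `(Du)_{ij} = ∂_j u_i`. -/
def Dmat (u : E2 → E2) (x : E2) : M2 :=
  Matrix.of fun i j => fderiv ℝ u x (EuclideanSpace.single j 1) i

/-- Divergence of a vector field on `ℝ²`. -/
def divg (ψ : E2 → E2) (x : E2) : ℝ := ∑ k, fderiv ℝ ψ x (EuclideanSpace.single k 1) k

/-- The set of numbers `∫_ω G : div φ` over admissible test fields `φ`; the total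
variation `|DG|(ω)` is its supremum, and `G ∈ BV(ω)` iff this set is bounded above. -/
def tvSet (G : E2 → M2) (ω : Set E2) : Set ℝ :=
  { r | ∃ φ : Fin 2 → Fin 2 → (E2 → E2),
      (∀ i j, ContDiff ℝ 1 (φ i j)) ∧
      (∀ i j, HasCompactSupport (φ i j)) ∧
      (∀ i j, ∀ x : E2, x ∉ ω → φ i j x = 0) ∧
      (∀ x : E2, ∑ i, ∑ j, ‖φ i j x‖ ^ 2 ≤ 1) ∧
      r = ∫ x in ω, ∑ i, ∑ j, G x i j * divg (φ i j) x }

/-- Total variation `|DG|(ω)` of a matrix field `G` over `ω`. -/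
def tv (G : E2 → M2) (ω : Set E2) : ℝ := sSup (tvSet G ω)

/-- The energy `E^ε[u,ω] = ∫_ω dist²(Du,K) dx + ε |D²u|(ω)`. -/
def energy (K : Set M2) (ε : ℝ) (u : E2 → E2) (ω : Set E2) : ℝ :=
  (∫ x in ω, distK K (Dmat u x) ^ 2) + ε * tv (Dmat u) ω

/-- The open rectangle `(x₀, x₀+ℓ) × (y₀, y₀+h)`. -/
def rect (x₀ ℓ y₀ h : ℝ) : Set E2 := {x | x 0 ∈ Ioo x₀ (x₀ + ℓ) ∧ x 1 ∈ Ioo y₀ (y₀ + h)}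

/-- The domain `Ω = (0,L) × (0,H)`. -/
def Omg (L H : ℝ) : Set E2 := rect 0 L 0 H

/-- The admissible class `M`: deformations (Lipschitz, so in particular `W^{1,2}`)
whose gradient has bounded variation on `Ω` and which coincide with the identity
on `∂Ω`. -/
def Adm (Ω : Set E2) : Set (E2 → E2) :=
  {u | (∃ C : NNReal, LipschitzWith C u) ∧ BddAbove (tvSet (Dmat u) Ω) ∧
       ∀ x ∈ frontier Ω, u x = x}

/-- The 1-periodic zigzag function `Z(t) = dist(t+1/4, ℤ) - 1/4`. -/
def Zfun (t : ℝ) : ℝ := |t + 1/4 - (round (t + 1/4) : ℝ)| - 1/4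

/-- Rescaled zigzag `Z_h(t) = h Z(t/h)`. -/
def Zh (h t : ℝ) : ℝ := h * Zfun (t / h)

/-!
Both `ω ↦ E_j^ε[u,ω]` and `ω ↦ ‖∂₁u₂‖_{L¹(ω)}` are superadditive over finite disjoint families
of open sets with null boundary; for the total variation this is because test fields supported
in disjoint pieces add up to an admissible test field on their union. Cutting `Ω` into
`N = ⌊H/λ⌋ ≥ H/(2λ)` horizontal stripes of width `λ`, some stripe `S` carries at most `2/N` of
each of the two quantities. Cutting `Ω` into `⌊L/λ⌋` vertical stripes `S'` and averaging three
quantities at once, the energy on `S'` and both quantities on `S ∩ S'` (relative to `S`), gives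
the remaining bounds, with `c = 24`.
-/

open Function

lemma continuous_coord (i : Fin 2) : Continuous fun x : E2 => x i :=
  (EuclideanSpace.proj i).continuous

def IsOpenNullFrontier (ω : Set E2) : Prop := IsOpen ω ∧ volume (frontier ω) = 0

lemma volume_setOf_coord_eq (i : Fin 2) (c : ℝ) : volume {x : E2 | x i = c} = 0 := by
  change volume (WithLp.ofLp ⁻¹' {f : Fin 2 → ℝ | f i = c}) = 0
  rw [(PiLp.volume_preserving_ofLp (Fin 2)).measure_preimage
    (measurableSet_eq_fun (measurable_pi_apply i) measurable_const).nullMeasurableSet]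
  exact Measure.pi_hyperplane (α := fun _ => ℝ) (fun _ => volume) i c

lemma IsOpenNullFrontier.inter {s t : Set E2} (hs : IsOpenNullFrontier s)
    (ht : IsOpenNullFrontier t) : IsOpenNullFrontier (s ∩ t) :=
  ⟨hs.1.inter ht.1, measure_mono_null ((frontier_inter_subset s t).trans
    (union_subset_union inter_subset_left inter_subset_right))
    (measure_union_null hs.2 ht.2)⟩

lemma isOpenNullFrontier_coord_mem_Ioo (i : Fin 2) (a b : ℝ) :
    IsOpenNullFrontier {x : E2 | x i ∈ Ioo a b} := by
  refine ⟨isOpen_Ioo.preimage (continuous_coord i), measure_mono_null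
    ((continuous_coord i).frontier_preimage_subset _) ?_⟩
  rcases lt_or_ge a b with hab | hab
  · rw [frontier_Ioo hab]
    exact measure_union_null (volume_setOf_coord_eq i a) (volume_setOf_coord_eq i b)
  · simp [Ioo_eq_empty (not_lt.2 hab)]

lemma isOpenNullFrontier_rect (a ℓ b h : ℝ) : IsOpenNullFrontier (rect a ℓ b h) :=
  (isOpenNullFrontier_coord_mem_Ioo 0 _ _).inter (isOpenNullFrontier_coord_mem_Ioo 1 _ _)

lemma volume_rect_lt_top (a ℓ b h : ℝ) : volume (rect a ℓ b h) < ⊤ := by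
  have hsub : rect a ℓ b h ⊆ WithLp.ofLp ⁻¹' Icc ![a, b] ![a + ℓ, b + h] := by
    rintro x ⟨hx0, hx1⟩
    simp only [mem_preimage, mem_Icc, Pi.le_def, Fin.forall_fin_two]
    exact ⟨⟨hx0.1.le, hx1.1.le⟩, hx0.2.le, hx1.2.le⟩
  refine (measure_mono hsub).trans_lt ?_
  rw [(PiLp.volume_preserving_ofLp (Fin 2)).measure_preimage measurableSet_Icc.nullMeasurableSet]
  exact isCompact_Icc.measure_lt_top

lemma rect_subset_rect {a ℓ b h a' ℓ' b' h' : ℝ} (ha : a ≤ a') (hℓ : a' + ℓ' ≤ a + ℓ)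
    (hb : b ≤ b') (hh : b' + h' ≤ b + h) : rect a' ℓ' b' h' ⊆ rect a ℓ b h :=
  fun _ ⟨hx0, hx1⟩ => ⟨Ioo_subset_Ioo ha hℓ hx0, Ioo_subset_Ioo hb hh hx1⟩

lemma pairwise_disjoint_Ioo_natCast_mul {lam : ℝ} (hlam : 0 ≤ lam) :
    Pairwise (Disjoint on fun k : ℕ => Ioo (k * lam) (k * lam + lam)) := by
  intro k k' hne
  wlog hlt : k < k' generalizing k k'
  · exact (this hne.symm (hne.symm.lt_of_le (not_lt.1 hlt))).symm
  have hle : (k : ℝ) * lam + lam ≤ k' * lam := by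
    have : (k : ℝ) + 1 ≤ k' := by exact_mod_cast hlt
    nlinarith
  exact Set.disjoint_left.2 fun x hx hx' => (hx.2.trans_le hle).not_gt hx'.1

lemma pairwise_disjoint_rect_horizontal {lam : ℝ} (hlam : 0 ≤ lam) (a ℓ : ℝ) :
    Pairwise (Disjoint on fun k : ℕ => rect a ℓ (k * lam) lam) := fun _ _ hne =>
  ((pairwise_disjoint_Ioo_natCast_mul hlam hne).preimage fun x : E2 => x 1).mono
    (fun _ hx => hx.2) (fun _ hx => hx.2)

lemma pairwise_disjoint_rect_vertical {lam : ℝ} (hlam : 0 ≤ lam) (b h : ℝ) :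
    Pairwise (Disjoint on fun k : ℕ => rect (k * lam) lam b h) := fun _ _ hne =>
  ((pairwise_disjoint_Ioo_natCast_mul hlam hne).preimage fun x : E2 => x 0).mono
    (fun _ hx => hx.1) (fun _ hx => hx.1)

lemma exists_mem_range_forall_le_card_mul_div {ι : Type*} [Fintype ι] {N : ℕ} (hN : 0 < N)
    {f : ι → ℕ → ℝ} {T : ι → ℝ} (hf : ∀ i, ∀ k ∈ Finset.range N, 0 ≤ f i k)
    (hT : ∀ i, ∑ k ∈ Finset.range N, f i k ≤ T i) :
    ∃ k ∈ Finset.range N, ∀ i, f i k ≤ Fintype.card ι * T i / N := by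
  have hT0 : ∀ i, 0 ≤ T i := fun i => (Finset.sum_nonneg (hf i)).trans (hT i)
  -- average over `k` the sum of the normalised quantities `f i k / T i`
  obtain ⟨k, hk, hle⟩ := Finset.exists_le_of_sum_le (Finset.nonempty_range_iff.2 hN.ne')
    (f := fun k => ∑ i, f i k / T i) (g := fun _ => (Fintype.card ι : ℝ) / N) <| by
      rw [Finset.sum_comm, Finset.sum_const, Finset.card_range, nsmul_eq_mul,
        mul_div_cancel₀ _ (by positivity : (N : ℝ) ≠ 0)]
      calc ∑ i, ∑ k ∈ Finset.range N, f i k / T i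
          ≤ ∑ _i : ι, (1 : ℝ) := Finset.sum_le_sum fun i _ => by
            rw [← Finset.sum_div]; exact div_le_one_of_le₀ (hT i) (hT0 i)
        _ = Fintype.card ι := by simp
  refine ⟨k, hk, fun i => ?_⟩
  rcases (hT0 i).eq_or_lt with hTi | hTi
  · rw [← hTi, mul_zero, zero_div]
    exact (Finset.single_le_sum (hf i) hk).trans (hT i |>.trans_eq hTi.symm)
  · have := (Finset.single_le_sum (fun i _ => div_nonneg (hf i k hk) (hT0 i))
      (Finset.mem_univ i)).trans hle
    rw [div_le_iff₀ hTi] at this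
    linarith [show (Fintype.card ι : ℝ) / N * T i = Fintype.card ι * T i / N by ring]

lemma natCast_mul_add_le_of_lt_floor {lam H : ℝ} (hlam : 0 < lam) {k : ℕ}
    (hk : k < ⌊H / lam⌋₊) : k * lam + lam ≤ H := by
  have : ((k + 1 : ℕ) : ℝ) ≤ H / lam := Nat.le_floor_iff' (Nat.succ_ne_zero k) |>.1 hk
  push_cast at this
  rw [le_div_iff₀ hlam] at this
  linarith

lemma div_floor_div_le {lam H T : ℝ} (hlam : 0 < lam) (hH : lam ≤ H) (hT : 0 ≤ T) :
    T / ⌊H / lam⌋₊ ≤ 2 * (lam / H) * T := by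
  have hx : 1 ≤ H / lam := (one_le_div hlam).2 hH
  have hN : (1 : ℝ) ≤ ⌊H / lam⌋₊ := by exact_mod_cast Nat.one_le_floor_iff _ |>.2 hx
  have h2N : H / lam ≤ 2 * ⌊H / lam⌋₊ := by linarith [Nat.lt_floor_add_one (H / lam)]
  rw [div_le_iff₀ (by linarith), show 2 * (lam / H) * T * ⌊H / lam⌋₊
    = T * (2 * ⌊H / lam⌋₊ / (H / lam)) by field_simp]
  exact le_mul_of_one_le_right hT ((one_le_div (by linarith)).2 h2N)

def SuperadditiveOn (F : Set E2 → ℝ) (Ω : Set E2) : Prop :=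
  ∀ (s : Finset ℕ) (ω : ℕ → Set E2) (R : Set E2), IsOpenNullFrontier R → R ⊆ Ω →
    (∀ k ∈ s, IsOpenNullFrontier (ω k) ∧ ω k ⊆ R) → (s : Set ℕ).PairwiseDisjoint ω →
    ∑ k ∈ s, F (ω k) ≤ F R

namespace SuperadditiveOn

variable {F G : Set E2 → ℝ} {Ω : Set E2}

lemma nonneg (hF : SuperadditiveOn F Ω) {R : Set E2} (hR : IsOpenNullFrontier R)
    (hRΩ : R ⊆ Ω) : 0 ≤ F R := by
  simpa using hF ∅ (fun _ => ∅) R hR hRΩ (by simp) (by simp)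

lemma add (hF : SuperadditiveOn F Ω) (hG : SuperadditiveOn G Ω) :
    SuperadditiveOn (fun ω => F ω + G ω) Ω := fun s ω R hR hRΩ hω hdisj => by
  rw [Finset.sum_add_distrib]
  exact add_le_add (hF s ω R hR hRΩ hω hdisj) (hG s ω R hR hRΩ hω hdisj)

lemma const_mul (hF : SuperadditiveOn F Ω) {c : ℝ} (hc : 0 ≤ c) :
    SuperadditiveOn (fun ω => c * F ω) Ω := fun s ω R hR hRΩ hω hdisj => by
  rw [← Finset.mul_sum]
  exact mul_le_mul_of_nonneg_left (hF s ω R hR hRΩ hω hdisj) hc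

end SuperadditiveOn

lemma superadditiveOn_setIntegral {f : E2 → ℝ} {Ω : Set E2} (hf : ∀ x, 0 ≤ f x)
    (hfi : IntegrableOn f Ω) : SuperadditiveOn (fun ω => ∫ x in ω, f x) Ω := by
  intro s ω R _ hRΩ hω hdisj
  rw [← integral_biUnion_finset s (fun k hk => (hω k hk).1.1.measurableSet) hdisj
    fun k hk => hfi.mono_set ((hω k hk).2.trans hRΩ)]
  exact setIntegral_mono_set (hfi.mono_set hRΩ) (.of_forall hf)
    (iUnion₂_subset fun k hk => (hω k hk).2).eventuallyLE

section Stripes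

variable {F G : Set E2 → ℝ} {L H lam : ℝ}

lemma exists_horizontal_stripe (hF : SuperadditiveOn F (Omg L H))
    (hG : SuperadditiveOn G (Omg L H)) (hlam : 0 < lam) (hlamH : lam ≤ H) :
    ∃ s ∈ Icc 0 (H - lam), F (rect 0 L s lam) ≤ 4 * (lam / H) * F (Omg L H) ∧
      G (rect 0 L s lam) ≤ 4 * (lam / H) * G (Omg L H) := by
  set N := ⌊H / lam⌋₊
  have hN : 0 < N := Nat.floor_pos.2 ((one_le_div hlam).2 hlamH)
  set S : ℕ → Set E2 := fun k => rect 0 L (k * lam) lam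
  have hΩ := isOpenNullFrontier_rect 0 L 0 H
  have hS : ∀ k ∈ Finset.range N, IsOpenNullFrontier (S k) ∧ S k ⊆ Omg L H := fun k hk =>
    have := natCast_mul_add_le_of_lt_floor hlam (Finset.mem_range.1 hk)
    ⟨isOpenNullFrontier_rect _ _ _ _, rect_subset_rect le_rfl le_rfl (by positivity)
      (by simpa using this)⟩
  have hdisj := (pairwise_disjoint_rect_horizontal hlam.le 0 L).set_pairwise (Finset.range N)
  obtain ⟨k, hk, hle⟩ := exists_mem_range_forall_le_card_mul_div hN
    (f := ![fun k => F (S k), fun k => G (S k)]) (T := ![F (Omg L H), G (Omg L H)])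
    (Fin.forall_fin_two.2 ⟨fun k hk => hF.nonneg (hS k hk).1 (hS k hk).2,
      fun k hk => hG.nonneg (hS k hk).1 (hS k hk).2⟩)
    (Fin.forall_fin_two.2 ⟨hF _ S _ hΩ subset_rfl hS hdisj, hG _ S _ hΩ subset_rfl hS hdisj⟩)
  have hbound : ∀ T : ℝ, 0 ≤ T → (2 : ℝ) * T / N ≤ 4 * (lam / H) * T := fun T hT => by
    rw [mul_div_assoc]
    linarith [div_floor_div_le hlam hlamH hT]
  refine ⟨k * lam, ⟨by positivity, ?_⟩, ?_, ?_⟩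
  · linarith [natCast_mul_add_le_of_lt_floor hlam (Finset.mem_range.1 hk)]
  · simpa using (hle 0).trans (hbound _ (hF.nonneg hΩ subset_rfl))
  · simpa using (hle 1).trans (hbound _ (hG.nonneg hΩ subset_rfl))

lemma exists_vertical_stripe (hF : SuperadditiveOn F (Omg L H))
    (hG : SuperadditiveOn G (Omg L H)) {S : Set E2} (hS : IsOpenNullFrontier S)
    (hSΩ : S ⊆ Omg L H) (hlam : 0 < lam) (hlamL : lam ≤ L) :
    ∃ s' ∈ Icc 0 (L - lam), F (rect s' lam 0 H) ≤ 6 * (lam / L) * F (Omg L H) ∧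
      F (S ∩ rect s' lam 0 H) ≤ 6 * (lam / L) * F S ∧
      G (S ∩ rect s' lam 0 H) ≤ 6 * (lam / L) * G S := by
  set N := ⌊L / lam⌋₊
  have hN : 0 < N := Nat.floor_pos.2 ((one_le_div hlam).2 hlamL)
  set V : ℕ → Set E2 := fun k => rect (k * lam) lam 0 H
  have hΩ := isOpenNullFrontier_rect 0 L 0 H
  have hV : ∀ k ∈ Finset.range N, IsOpenNullFrontier (V k) ∧ V k ⊆ Omg L H := fun k hk =>
    have := natCast_mul_add_le_of_lt_floor hlam (Finset.mem_range.1 hk)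
    ⟨isOpenNullFrontier_rect _ _ _ _, rect_subset_rect (by positivity) (by simpa using this)
      le_rfl le_rfl⟩
  have hSV : ∀ k ∈ Finset.range N, IsOpenNullFrontier (S ∩ V k) ∧ S ∩ V k ⊆ S :=
    fun k hk => ⟨hS.inter (hV k hk).1, inter_subset_left⟩
  have hdisj : (Finset.range N : Set ℕ).PairwiseDisjoint V :=
    (pairwise_disjoint_rect_vertical hlam.le 0 H).set_pairwise _
  have hdisjS : (Finset.range N : Set ℕ).PairwiseDisjoint (fun k => S ∩ V k) :=
    hdisj.mono fun _ => inter_subset_right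
  obtain ⟨k, hk, hle⟩ := exists_mem_range_forall_le_card_mul_div hN
    (f := ![fun k => F (V k), fun k => F (S ∩ V k), fun k => G (S ∩ V k)])
    (T := ![F (Omg L H), F S, G S])
    (Fin.forall_fin_succ.2 ⟨fun k hk => hF.nonneg (hV k hk).1 (hV k hk).2,
      Fin.forall_fin_two.2 ⟨fun k hk => hF.nonneg (hSV k hk).1 ((hSV k hk).2.trans hSΩ),
        fun k hk => hG.nonneg (hSV k hk).1 ((hSV k hk).2.trans hSΩ)⟩⟩)
    (Fin.forall_fin_succ.2 ⟨hF _ V _ hΩ subset_rfl hV hdisj,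
      Fin.forall_fin_two.2 ⟨hF _ _ _ hS hSΩ hSV hdisjS, hG _ _ _ hS hSΩ hSV hdisjS⟩⟩)
  have hbound : ∀ T : ℝ, 0 ≤ T → (3 : ℝ) * T / N ≤ 6 * (lam / L) * T := fun T hT => by
    rw [mul_div_assoc]
    linarith [div_floor_div_le hlam hlamL hT]
  refine ⟨k * lam, ⟨by positivity, ?_⟩, ?_, ?_, ?_⟩
  · linarith [natCast_mul_add_le_of_lt_floor hlam (Finset.mem_range.1 hk)]
  · simpa using (hle 0).trans (hbound _ (hF.nonneg hΩ subset_rfl))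
  · simpa using (hle 1).trans (hbound _ (hF.nonneg hS hSΩ))
  · simpa using (hle 2).trans (hbound _ (hG.nonneg hS hSΩ))

end Stripes

lemma sum_csSup_le {ι : Type*} [DecidableEq ι] (s : Finset ι) {S : ι → Set ℝ} {T : ℝ}
    (hS : ∀ i ∈ s, (S i).Nonempty) (h : ∀ r : ι → ℝ, (∀ i ∈ s, r i ∈ S i) → ∑ i ∈ s, r i ≤ T) :
    ∑ i ∈ s, sSup (S i) ≤ T := by
  induction s using Finset.induction_on generalizing T with
  | empty => simpa using h 0 (by simp)
  | insert a s ha ih =>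
    rw [Finset.sum_insert ha, ← le_sub_iff_add_le']
    refine ih (fun i hi => hS i (Finset.mem_insert_of_mem hi)) fun r hr => ?_
    rw [le_sub_comm]
    refine csSup_le (hS a (Finset.mem_insert_self a s)) fun x hx => ?_
    have := h (update r a x) fun i hi => by
      rcases eq_or_ne i a with rfl | hia
      · simpa using hx
      · simpa [hia] using hr i ((Finset.mem_insert.1 hi).resolve_left hia)
    rw [Finset.sum_insert ha, update_self, Finset.sum_update_of_notMem ha] at this
    linarith

section TotalVariation

variable {G : E2 → M2}

def IsTestField (ω : Set E2) (φ : Fin 2 → Fin 2 → E2 → E2) : Prop :=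
  (∀ i j, ContDiff ℝ 1 (φ i j)) ∧ (∀ i j, HasCompactSupport (φ i j)) ∧
    (∀ i j, ∀ x ∉ ω, φ i j x = 0) ∧ ∀ x, ∑ i, ∑ j, ‖φ i j x‖ ^ 2 ≤ 1

def tvPairing (G : E2 → M2) (φ : Fin 2 → Fin 2 → E2 → E2) (x : E2) : ℝ :=
  ∑ i, ∑ j, G x i j * divg (φ i j) x

lemma mem_tvSet_iff {ω : Set E2} {r : ℝ} :
    r ∈ tvSet G ω ↔ ∃ φ, IsTestField ω φ ∧ r = ∫ x in ω, tvPairing G φ x := by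
  simp only [tvSet, IsTestField, tvPairing, mem_ofPred_eq, and_assoc]

lemma zero_mem_tvSet (G : E2 → M2) (ω : Set E2) : (0 : ℝ) ∈ tvSet G ω :=
  mem_tvSet_iff.2 ⟨fun _ _ _ => 0, ⟨fun _ _ => contDiff_const,
    fun _ _ => HasCompactSupport.zero, fun _ _ _ _ => rfl, fun _ => by simp⟩,
    by simp [tvPairing, divg]⟩

lemma tv_nonneg {ω : Set E2} (h : BddAbove (tvSet G ω)) : 0 ≤ tv G ω :=
  le_csSup h (zero_mem_tvSet G ω)

lemma IsTestField.mono {ω Ω : Set E2} {φ : Fin 2 → Fin 2 → E2 → E2} (hφ : IsTestField ω φ)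
    (hωΩ : ω ⊆ Ω) : IsTestField Ω φ :=
  ⟨hφ.1, hφ.2.1, fun i j x hx => hφ.2.2.1 i j x fun h => hx (hωΩ h), hφ.2.2.2⟩

lemma IsTestField.sum {ι : Type*} {s : Finset ι} {ω : ι → Set E2} {Ω : Set E2}
    {φ : ι → Fin 2 → Fin 2 → E2 → E2} (hφ : ∀ i ∈ s, IsTestField (ω i) (φ i))
    (hωΩ : ∀ i ∈ s, ω i ⊆ Ω) (hdisj : (s : Set ι).PairwiseDisjoint ω) :
    IsTestField Ω fun a b y => ∑ i ∈ s, φ i a b y := by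
  refine ⟨fun a b => ContDiff.sum fun i hi => (hφ i hi).1 a b, fun a b => ?_,
    fun a b x hx => Finset.sum_eq_zero fun i hi => ((hφ i hi).mono (hωΩ i hi)).2.2.1 a b x hx,
    fun x => ?_⟩
  · refine HasCompactSupport.intro (s.isCompact_biUnion fun i hi => (hφ i hi).2.1 a b)
      fun x hx => Finset.sum_eq_zero fun i hi => ?_
    exact image_eq_zero_of_notMem_tsupport fun h => hx (mem_biUnion hi h)
  · by_cases hx : ∃ i ∈ s, x ∈ ω i
    · obtain ⟨i₀, hi₀, hx₀⟩ := hx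
      have hsum : ∀ a b, ∑ i ∈ s, φ i a b x = φ i₀ a b x := fun a b =>
        Finset.sum_eq_single_of_mem i₀ hi₀ fun i hi hne =>
          (hφ i hi).2.2.1 a b x (Set.disjoint_left.1 (hdisj hi₀ hi hne.symm) hx₀)
      simpa only [hsum] using (hφ i₀ hi₀).2.2.2 x
    · push Not at hx
      simp [Finset.sum_eq_zero fun i hi => (hφ i hi).2.2.1 _ _ x (hx i hi)]

lemma divg_eq_zero_of_notMem_closure {ω : Set E2} {φ : E2 → E2} (hφ : ∀ x ∉ ω, φ x = 0)
    {x : E2} (hx : x ∉ closure ω) : divg φ x = 0 := by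
  have hev : φ =ᶠ[𝓝 x] fun _ => 0 := by
    filter_upwards [isClosed_closure.isOpen_compl.mem_nhds hx] with y hy
    exact hφ y fun h => hy (subset_closure h)
  simp [divg, hev.fderiv_eq]

lemma tvPairing_eq_zero_of_notMem_closure {ω : Set E2} {φ : Fin 2 → Fin 2 → E2 → E2}
    (hφ : IsTestField ω φ) {x : E2} (hx : x ∉ closure ω) : tvPairing G φ x = 0 := by
  simp [tvPairing, divg_eq_zero_of_notMem_closure (hφ.2.2.1 _ _) hx]

lemma divg_sum {ι : Type*} (s : Finset ι) {φ : ι → E2 → E2} {x : E2}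
    (hφ : ∀ i ∈ s, DifferentiableAt ℝ (φ i) x) :
    divg (fun y => ∑ i ∈ s, φ i y) x = ∑ i ∈ s, divg (φ i) x := by
  simp only [divg, fderiv_fun_sum hφ, sum_apply, WithLp.ofLp_sum,
    Finset.sum_apply]
  exact Finset.sum_comm

lemma tvPairing_sum {ι : Type*} (s : Finset ι) {φ : ι → Fin 2 → Fin 2 → E2 → E2} {x : E2}
    (hφ : ∀ i ∈ s, ∀ a b, DifferentiableAt ℝ (φ i a b) x) :
    tvPairing G (fun a b y => ∑ i ∈ s, φ i a b y) x = ∑ i ∈ s, tvPairing G (φ i) x := by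
  have hdiv : ∀ a b, divg (fun y => ∑ i ∈ s, φ i a b y) x = ∑ i ∈ s, divg (φ i a b) x :=
    fun a b => divg_sum s fun i hi => hφ i hi a b
  simp only [tvPairing, hdiv, Finset.mul_sum]
  exact (Finset.sum_congr rfl fun a _ => Finset.sum_comm).trans Finset.sum_comm

lemma continuous_divg {φ : E2 → E2} (hφ : ContDiff ℝ 1 φ) : Continuous (divg φ) :=
  continuous_finsetSum _ fun k _ => (continuous_coord k).comp
    ((hφ.continuous_fderiv one_ne_zero).clm_apply continuous_const)

lemma HasCompactSupport.divg {φ : E2 → E2} (hφ : HasCompactSupport φ) :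
    HasCompactSupport (divg φ) :=
  (hφ.fderiv (𝕜 := ℝ)).comp_left (g := fun A : E2 →L[ℝ] E2 => ∑ k, A (EuclideanSpace.single k 1) k)
    (by simp)

lemma IsTestField.integrable_tvPairing {ω : Set E2} {φ : Fin 2 → Fin 2 → E2 → E2} {C : ℝ}
    (hφ : IsTestField ω φ) (hGm : ∀ a b, Measurable fun x => G x a b)
    (hGb : ∀ x a b, ‖G x a b‖ ≤ C) : Integrable (tvPairing G φ) :=
  integrable_finsetSum _ fun a _ => integrable_finsetSum _ fun b _ =>
    ((continuous_divg (hφ.1 a b)).integrable_of_hasCompactSupport (hφ.2.1 a b).divg).bdd_mul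
      (hGm a b).aestronglyMeasurable (.of_forall fun x => hGb x a b)

lemma IsOpenNullFrontier.setIntegral_eq {ω Ω : Set E2} {f : E2 → ℝ} (hω : IsOpenNullFrontier ω)
    (hΩ : MeasurableSet Ω) (hωΩ : ω ⊆ Ω) (hf : ∀ x ∉ closure ω, f x = 0) :
    ∫ x in Ω, f x = ∫ x in ω, f x := by
  refine setIntegral_eq_of_subset_of_ae_sdiff_eq_zero hΩ.nullMeasurableSet hωΩ ?_
  filter_upwards [measure_eq_zero_iff_ae_notMem.1 hω.2] with x hx hxd
  exact hf x fun hc => hx (hω.1.frontier_eq ▸ ⟨hc, hxd.2⟩)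

lemma tvSet_mono {ω Ω : Set E2} (hω : IsOpenNullFrontier ω) (hΩ : MeasurableSet Ω)
    (hωΩ : ω ⊆ Ω) : tvSet G ω ⊆ tvSet G Ω := fun r hr => by
  obtain ⟨φ, hφ, rfl⟩ := mem_tvSet_iff.1 hr
  exact mem_tvSet_iff.2 ⟨φ, hφ.mono hωΩ,
    (hω.setIntegral_eq hΩ hωΩ fun _ hx => tvPairing_eq_zero_of_notMem_closure hφ hx).symm⟩

variable {Ω : Set E2} {C : ℝ}

lemma sum_mem_tvSet {ι : Type*} {s : Finset ι} {ω : ι → Set E2} (hΩ : MeasurableSet Ω)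
    (hω : ∀ i ∈ s, IsOpenNullFrontier (ω i) ∧ ω i ⊆ Ω) (hdisj : (s : Set ι).PairwiseDisjoint ω)
    (hGm : ∀ a b, Measurable fun x => G x a b) (hGb : ∀ x a b, ‖G x a b‖ ≤ C) {r : ι → ℝ}
    (hr : ∀ i ∈ s, r i ∈ tvSet G (ω i)) : ∑ i ∈ s, r i ∈ tvSet G Ω := by
  simp only [mem_tvSet_iff] at hr ⊢
  choose! φ hφ hrφ using hr
  refine ⟨_, IsTestField.sum hφ (fun i hi => (hω i hi).2) hdisj, ?_⟩
  calc ∑ i ∈ s, r i = ∑ i ∈ s, ∫ x in Ω, tvPairing G (φ i) x :=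
        Finset.sum_congr rfl fun i hi => (hrφ i hi).trans ((hω i hi).1.setIntegral_eq hΩ
          (hω i hi).2 fun _ hx => tvPairing_eq_zero_of_notMem_closure (hφ i hi) hx).symm
    _ = ∫ x in Ω, ∑ i ∈ s, tvPairing G (φ i) x := (integral_finsetSum s fun i hi =>
        ((hφ i hi).integrable_tvPairing hGm hGb).integrableOn).symm
    _ = _ := setIntegral_congr_fun hΩ fun x _ => (tvPairing_sum s fun i hi a b =>
        (((hφ i hi).1 a b).differentiable one_ne_zero).differentiableAt).symm

lemma superadditiveOn_tv (hΩ : MeasurableSet Ω) (hGm : ∀ a b, Measurable fun x => G x a b)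
    (hGb : ∀ x a b, ‖G x a b‖ ≤ C) (hB : BddAbove (tvSet G Ω)) : SuperadditiveOn (tv G) Ω :=
  fun s ω _ hR hRΩ hω hdisj =>
    sum_csSup_le s (fun k _ => ⟨0, zero_mem_tvSet G (ω k)⟩) fun _ hr =>
      le_csSup (hB.mono (tvSet_mono hR hΩ hRΩ))
        (sum_mem_tvSet hR.1.measurableSet hω hdisj hGm hGb hr)

end TotalVariation

section Energy

lemma norm_le_two_mul_of_forall_abs_le {M : M2} {c : ℝ} (hc : 0 ≤ c) (h : ∀ a b, |M a b| ≤ c) :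
    ‖M‖ ≤ 2 * c := by
  have hsq : ‖M‖ ^ 2 = ∑ a, ∑ b, |M a b| ^ 2 := by
    change ‖WithLp.toLp 2 fun a => WithLp.toLp 2 (M a)‖ ^ 2 = _
    simp [PiLp.norm_sq_eq_of_L2]
  refine (pow_le_pow_iff_left₀ (norm_nonneg M) (by positivity) two_ne_zero).1 ?_
  have hb : ∀ a b, |M a b| ^ 2 ≤ c ^ 2 := fun a b => pow_le_pow_left₀ (abs_nonneg _) (h a b) 2
  simp only [hsq, Fin.sum_univ_two] at hb ⊢
  linarith [hb 0 0, hb 0 1, hb 1 0, hb 1 1]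

lemma abs_Dmat_apply_le {u : E2 → E2} {C : NNReal} (hu : LipschitzWith C u) (x : E2)
    (a b : Fin 2) : |Dmat u x a b| ≤ C :=
  calc |Dmat u x a b| ≤ ‖fderiv ℝ u x (EuclideanSpace.single b 1)‖ :=
        PiLp.norm_apply_le (fderiv ℝ u x (EuclideanSpace.single b 1)) a
    _ ≤ ‖fderiv ℝ u x‖ := by simpa using (fderiv ℝ u x).le_opNorm (EuclideanSpace.single b 1)
    _ ≤ C := norm_fderiv_le_of_lipschitz ℝ hu

lemma measurable_Dmat_apply (u : E2 → E2) (a b : Fin 2) : Measurable fun x => Dmat u x a b :=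
  (measurable_pi_apply a).comp
    ((WithLp.measurable_ofLp 2 _).comp (measurable_fderiv_apply_const ℝ u _))

lemma measurable_distK_Dmat (K : Set M2) (u : E2 → E2) :
    Measurable fun x => distK K (Dmat u x) :=
  (show Continuous fun F : Fin 2 → Fin 2 → ℝ => infDist (Matrix.of F) K from
    continuous_infDist_pt K).measurable.comp
      (measurable_pi_lambda _ fun a => measurable_pi_lambda _ (measurable_Dmat_apply u a))

lemma Kj_nonempty (j : ℕ) (α : ℝ) : (Kj j α).Nonempty := by
  have h1 : (1 : M2) ∈ SO2 := ⟨by simp, by simp⟩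
  unfold Kj K1 K2
  split_ifs
  exacts [⟨_, Or.inl ⟨1, h1, rfl⟩⟩, ⟨_, Or.inl ⟨1, h1, rfl⟩⟩]

variable {K : Set M2} {u : E2 → E2} {C : NNReal} {Ω : Set E2}

lemma integrableOn_distK_Dmat_sq (hK : K.Nonempty) (hu : LipschitzWith C u)
    (hΩ : volume Ω < ⊤) : IntegrableOn (fun x => distK K (Dmat u x) ^ 2) Ω := by
  obtain ⟨A, hA⟩ := hK
  refine Measure.integrableOn_of_bounded (M := (2 * C + ‖A‖) ^ 2) hΩ.ne
    ((measurable_distK_Dmat K u).pow_const 2).aestronglyMeasurable (.of_forall fun x => ?_)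
  have hdist : distK K (Dmat u x) ≤ 2 * C + ‖A‖ :=
    (infDist_le_dist_of_mem hA).trans ((dist_le_norm_add_norm _ _).trans (add_le_add_left
      (norm_le_two_mul_of_forall_abs_le C.coe_nonneg (abs_Dmat_apply_le hu x)) _))
  rw [Real.norm_eq_abs, abs_pow, sq_abs]
  exact pow_le_pow_left₀ infDist_nonneg hdist 2

lemma superadditiveOn_energy (hK : K.Nonempty) {ε : ℝ} (hε : 0 ≤ ε) (hu : LipschitzWith C u)
    (hΩm : MeasurableSet Ω) (hΩ : volume Ω < ⊤) (hBV : BddAbove (tvSet (Dmat u) Ω)) :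
    SuperadditiveOn (energy K ε u) Ω :=
  (superadditiveOn_setIntegral (fun _ => sq_nonneg _) (integrableOn_distK_Dmat_sq hK hu hΩ)).add
    ((superadditiveOn_tv hΩm (measurable_Dmat_apply u)
      (abs_Dmat_apply_le hu) hBV).const_mul hε)

end Energy

/-- Lemma 3.1(i) (localization): for every `λ ∈ (0, min{L,H}]` there are a
horizontal stripe `S = (0,L)×(s,s+λ)` and a vertical stripe `S' = (s',s'+λ)×(0,H)`
on which the energy (and `‖∂₁u₂‖_{L¹}`) is no higher than on average. -/
theorem localization_stripes :
    ∃ c : ℝ, 0 < c ∧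
      ∀ H L α ε : ℝ, ∀ j : ℕ, 0 < H → 0 < L → (j = 1 ∨ j = 2) →
        α ∈ Ioo (0:ℝ) 1 → 0 < ε →
        ∀ u ∈ Adm (Omg L H), ∀ lam : ℝ, 0 < lam → lam ≤ min L H →
          ∃ s s' : ℝ, s ∈ Icc 0 (H - lam) ∧ s' ∈ Icc 0 (L - lam) ∧
            energy (Kj j α) ε u (rect 0 L s lam) ≤
              c * (lam / H) * energy (Kj j α) ε u (Omg L H) ∧
            energy (Kj j α) ε u (rect s' lam 0 H) ≤
              c * (lam / L) * energy (Kj j α) ε u (Omg L H) ∧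
            energy (Kj j α) ε u (rect 0 L s lam ∩ rect s' lam 0 H) ≤
              c * (lam ^ 2 / (L * H)) * energy (Kj j α) ε u (Omg L H) ∧
            (∫ x in rect 0 L s lam ∩ rect s' lam 0 H, |Dmat u x 1 0|) ≤
              c * (lam ^ 2 / (L * H)) * ∫ x in Omg L H, |Dmat u x 1 0| := by
  refine ⟨24, by norm_num, fun H L α ε j _ _ _ _ hε u hu lam hlam hlamLH => ?_⟩
  obtain ⟨⟨C, hC⟩, hBV, -⟩ := hu
  have hΩ := isOpenNullFrontier_rect 0 L 0 H
  have hE := superadditiveOn_energy (Kj_nonempty j α) hε.le hC hΩ.1.measurableSet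
    (volume_rect_lt_top 0 L 0 H) hBV
  have hI : SuperadditiveOn (fun ω => ∫ x in ω, |Dmat u x 1 0|) (Omg L H) :=
    superadditiveOn_setIntegral (fun _ => abs_nonneg _)
      (Measure.integrableOn_of_bounded (volume_rect_lt_top 0 L 0 H).ne
        (measurable_Dmat_apply u 1 0).abs.aestronglyMeasurable
        (.of_forall fun x => (abs_abs _).trans_le (abs_Dmat_apply_le hC x 1 0)))
  obtain ⟨s, hs, hSE, hSI⟩ := exists_horizontal_stripe hE hI hlam (hlamLH.trans (min_le_right _ _))
  obtain ⟨s', hs', hS'E, hSS'E, hSS'I⟩ := exists_vertical_stripe hE hI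
    (isOpenNullFrontier_rect 0 L s lam) (rect_subset_rect le_rfl le_rfl hs.1 (by linarith [hs.2]))
    hlam (hlamLH.trans (min_le_left _ _))
  have hE0 := hE.nonneg hΩ subset_rfl
  have h6 : 0 ≤ 6 * (lam / L) := by positivity
  refine ⟨s, s', hs, hs', hSE.trans ?_, hS'E.trans ?_, hSS'E.trans ?_, hSS'I.trans ?_⟩
  · exact mul_le_mul_of_nonneg_right (by gcongr; norm_num) hE0
  · exact mul_le_mul_of_nonneg_right (by gcongr; norm_num) hE0
  · exact (mul_le_mul_of_nonneg_left hSE h6).trans_eq (by ring)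
  · exact (mul_le_mul_of_nonneg_left hSI h6).trans_eq (by ring)
end
end

section
/- Let α∈(0,1) and Z = [[0,1],[1,0]]. Then for every matrix F∈ℝ^{2×2}, one has dist(ZFZ, K₁) ≤ dist(F, K₁) + α². -/
/-!
Formalization framework for "Energy scaling and branched microstructures in a
model for shape-memory alloys with SO(2) invariance" (Chan–Conti).

Deformations are maps `u : ℝ² → ℝ²` (with `ℝ²` the Euclidean plane).  The
gradient `Du` is the 2×2 matrix of partial derivatives, matrices carry the
Frobenius norm, and the total variation `|D²u|(ω)` of the (matrix-valued)
gradient is defined by duality against C¹ compactly supported test fields.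
The admissible class consists of (Lipschitz) deformations whose gradient has
bounded variation and which agree with the identity on `∂Ω`.
-/

open MeasureTheory Set Metric Topology

noncomputable section

attribute [local instance] Matrix.frobeniusNormedAddCommGroup

/-!
Conjugation `F ↦ ZFZ` is a Frobenius isometry, so it suffices that every `ZGZ` with `G ∈ K₁` lies
within `α²` of `K₁`. Writing `G = R S` with `R ∈ SO(2)` and `S = [[1,t],[0,1]]`, `t = ∓α`, we have
`ZGZ = (ZRZ)(ZSZ)`, where `ZRZ ∈ SO(2)` and `ZSZ = [[1,0],[t,1]]`. The rotation `Q` with cosine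
`c = 1/√(1+t²)` and sine `tc` gives `QS = [[c,0],[tc,1/c]]`, at distance `√2 (1/c - 1) ≤ t²`
from `ZSZ`.
-/

open Matrix

lemma SO2_eq_specialOrthogonalGroup : SO2 = (specialOrthogonalGroup (Fin 2) ℝ : Set M2) := by
  ext R
  simp [SO2, mem_specialOrthogonalGroup_iff, mem_orthogonalGroup_iff]

namespace Matrix

variable {m n R : Type*} [Fintype m] [Fintype n] [DecidableEq n]

lemma transpose_mem_orthogonalGroup [CommRing R] {U : Matrix n n R}
    (hU : U ∈ orthogonalGroup n R) : Uᵀ ∈ orthogonalGroup n R := by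
  rw [mem_orthogonalGroup_iff, transpose_transpose]
  exact (mem_orthogonalGroup_iff' _ _).1 hU

lemma mul_mul_transpose_mem_specialOrthogonalGroup [CommRing R] {U A : Matrix n n R}
    (hU : U ∈ orthogonalGroup n R) (hA : A ∈ specialOrthogonalGroup n R) :
    U * A * Uᵀ ∈ specialOrthogonalGroup n R := by
  rw [mem_specialOrthogonalGroup_iff] at hA ⊢
  refine ⟨mul_mem (mul_mem hU hA.1) (transpose_mem_orthogonalGroup hU), ?_⟩
  rw [det_mul, det_mul, hA.2, mul_one, ← det_mul, (mem_orthogonalGroup_iff _ _).1 hU, det_one]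

omit [DecidableEq n] in
lemma frobenius_norm_sq_eq_trace (A : Matrix m n ℝ) : ‖A‖ ^ 2 = (Aᵀ * A).trace := by
  rw [frobenius_norm_def, ← Real.rpow_natCast, ← Real.rpow_mul (by positivity)]
  norm_num [trace, mul_apply]
  rw [Finset.sum_comm]
  simp [sq]

lemma frobenius_norm_sq_fin_two_of (a b c d : ℝ) :
    ‖!![a, b; c, d]‖ ^ 2 = a ^ 2 + b ^ 2 + c ^ 2 + d ^ 2 := by
  rw [frobenius_norm_sq_eq_trace]
  simp [trace_fin_two, mul_apply, Fin.sum_univ_two]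
  ring

lemma frobenius_norm_orthogonal_mul {U : Matrix n n ℝ} (hU : U ∈ orthogonalGroup n ℝ)
    (A : Matrix n m ℝ) : ‖U * A‖ = ‖A‖ := by
  rw [← sq_eq_sq₀ (norm_nonneg _) (norm_nonneg _), frobenius_norm_sq_eq_trace,
    frobenius_norm_sq_eq_trace, transpose_mul, Matrix.mul_assoc, ← Matrix.mul_assoc Uᵀ,
    (mem_orthogonalGroup_iff' _ _).1 hU, Matrix.one_mul]

lemma frobenius_norm_mul_orthogonal {U : Matrix n n ℝ} (hU : U ∈ orthogonalGroup n ℝ)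
    (A : Matrix m n ℝ) : ‖A * U‖ = ‖A‖ := by
  rw [← frobenius_norm_transpose, transpose_mul,
    frobenius_norm_orthogonal_mul (transpose_mem_orthogonalGroup hU), frobenius_norm_transpose]

lemma isometry_orthogonal_mul_mul_orthogonal {U V : Matrix n n ℝ}
    (hU : U ∈ orthogonalGroup n ℝ) (hV : V ∈ orthogonalGroup n ℝ) :
    Isometry (fun A : Matrix n n ℝ => U * A * V) :=
  Isometry.of_dist_eq fun A B => by
    rw [dist_eq_norm, dist_eq_norm, ← Matrix.sub_mul, ← Matrix.mul_sub,
      frobenius_norm_mul_orthogonal hV, frobenius_norm_orthogonal_mul hU]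

end Matrix

lemma Metric.infDist_le_infDist_add_of_forall_infDist_le {X : Type*} [PseudoMetricSpace X]
    {s t : Set X} {δ : ℝ} (hs : s.Nonempty) (h : ∀ z ∈ s, infDist z t ≤ δ) (x : X) :
    infDist x t ≤ infDist x s + δ := by
  have := hs.to_subtype
  rw [← sub_le_iff_le_add, infDist_eq_iInf (x := x) (s := s)]
  exact le_ciInf fun z => by
    linarith [infDist_le_infDist_add_dist (x := x) (y := z.1) (s := t), h z z.2]

local notation "𝐙" => (!![0, 1; 1, 0] : M2)

lemma Z_mul_Z : 𝐙 * 𝐙 = 1 := by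
  rw [mul_fin_two, one_fin_two]
  norm_num

lemma Z_transpose : 𝐙ᵀ = 𝐙 := by
  ext i j
  fin_cases i <;> fin_cases j <;> rfl

lemma Z_mem_orthogonalGroup : 𝐙 ∈ orthogonalGroup (Fin 2) ℝ := by
  rw [mem_orthogonalGroup_iff, Z_transpose, Z_mul_Z]

lemma exists_rotation_norm_Z_conj_shear_sub_le (t : ℝ) :
    ∃ Q ∈ specialOrthogonalGroup (Fin 2) ℝ,
      ‖𝐙 * !![1, t; 0, 1] * 𝐙 - Q * !![1, t; 0, 1]‖ ≤ t ^ 2 := by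
  set u := √(1 + t ^ 2)
  have hu : u ^ 2 = 1 + t ^ 2 := Real.sq_sqrt (by positivity)
  have hu1 : 1 ≤ u := Real.one_le_sqrt.2 (by nlinarith)
  refine ⟨!![u⁻¹, -(t * u⁻¹); t * u⁻¹, u⁻¹], ?_, ?_⟩
  · rw [of_mem_specialOrthogonalGroup_fin_two_iff]
    refine ⟨rfl, rfl, ?_⟩
    field_simp
    linarith
  have hdiff : 𝐙 * !![1, t; 0, 1] * 𝐙 - !![u⁻¹, -(t * u⁻¹); t * u⁻¹, u⁻¹] * !![1, t; 0, 1]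
      = !![1 - u⁻¹, 0; t - t * u⁻¹, 1 - u] := by
    ext i j
    fin_cases i <;> fin_cases j <;> simp <;> field_simp <;> linarith
  have ht : t ^ 2 = (u - 1) * (u + 1) := by linear_combination -hu
  refine le_of_pow_le_pow_left₀ two_ne_zero (by positivity) ?_
  calc _ = 2 * (u - 1) ^ 2 := by
        rw [hdiff, frobenius_norm_sq_fin_two_of]
        field_simp
        linear_combination -(u - 1) ^ 2 * hu
    _ ≤ (t ^ 2) ^ 2 := by
        rw [ht]
        nlinarith [mul_le_mul_of_nonneg_left (show 4 ≤ (u + 1) ^ 2 by nlinarith)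
          (sq_nonneg (u - 1))]

lemma infDist_Z_conj_rotation_mul_shear_le {R : M2}
    (hR : R ∈ specialOrthogonalGroup (Fin 2) ℝ) (t : ℝ) :
    infDist (𝐙 * (R * !![1, t; 0, 1]) * 𝐙)
      ((· * !![1, t; 0, 1]) '' (specialOrthogonalGroup (Fin 2) ℝ : Set M2)) ≤ t ^ 2 := by
  obtain ⟨Q, hQ, hQt⟩ := exists_rotation_norm_Z_conj_shear_sub_le t
  have hZRZ : 𝐙 * R * 𝐙 ∈ specialOrthogonalGroup (Fin 2) ℝ := by
    simpa [Z_transpose] using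
      mul_mul_transpose_mem_specialOrthogonalGroup Z_mem_orthogonalGroup hR
  have hfactor : 𝐙 * (R * !![1, t; 0, 1]) * 𝐙 - 𝐙 * R * 𝐙 * Q * !![1, t; 0, 1]
      = 𝐙 * R * 𝐙 * (𝐙 * !![1, t; 0, 1] * 𝐙 - Q * !![1, t; 0, 1]) := by
    simp only [Matrix.mul_sub, Matrix.mul_assoc]
    rw [← Matrix.mul_assoc 𝐙 𝐙, Z_mul_Z, Matrix.one_mul]
  refine (infDist_le_dist_of_mem (mem_image_of_mem _ (mul_mem hZRZ hQ))).trans ?_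
  rwa [dist_eq_norm, hfactor, frobenius_norm_orthogonal_mul hZRZ.1]

lemma infDist_Z_conj_le_of_mem_K1 {α : ℝ} {G : M2} (hG : G ∈ K1 α) :
    infDist (𝐙 * G * 𝐙) (K1 α) ≤ α ^ 2 := by
  have hne (t : ℝ) :
      ((· * !![1, t; 0, 1]) '' (specialOrthogonalGroup (Fin 2) ℝ : Set M2)).Nonempty :=
    ⟨_, 1, one_mem _, rfl⟩
  rw [K1, SO2_eq_specialOrthogonalGroup] at *
  rcases hG with ⟨R, hR, rfl⟩ | ⟨R, hR, rfl⟩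
  · refine (infDist_le_infDist_of_subset subset_union_left (hne _)).trans ?_
    simpa using infDist_Z_conj_rotation_mul_shear_le hR (-α)
  · exact (infDist_le_infDist_of_subset subset_union_right (hne _)).trans
      (infDist_Z_conj_rotation_mul_shear_le hR α)

theorem dist_ZFZ_le_general (α : ℝ) (F : M2) :
    distK (K1 α) (!![0, 1; 1, 0] * F * !![0, 1; 1, 0]) ≤ distK (K1 α) F + α ^ 2 := by
  have hK : (K1 α).Nonempty := ⟨_, Or.inl ⟨1, by simp [SO2], rfl⟩⟩
  calc infDist (𝐙 * F * 𝐙) (K1 α)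
      ≤ infDist (𝐙 * F * 𝐙) ((fun G => 𝐙 * G * 𝐙) '' K1 α) + α ^ 2 :=
        infDist_le_infDist_add_of_forall_infDist_le (hK.image _)
          (forall_mem_image.2 fun _ => infDist_Z_conj_le_of_mem_K1) _
    _ = infDist F (K1 α) + α ^ 2 := by
        rw [infDist_image (isometry_orthogonal_mul_mul_orthogonal Z_mem_orthogonalGroup
          Z_mem_orthogonalGroup)]

/-- Estimate (2.12): with `Z = [[0,1],[1,0]]`, for every `F ∈ ℝ^{2×2}` one has
`dist(ZFZ, K₁) ≤ dist(F, K₁) + α²`. -/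
theorem dist_ZFZ_le (α : ℝ) (hα : α ∈ Ioo (0:ℝ) 1) (F : M2) :
    distK (K1 α) (!![0, 1; 1, 0] * F * !![0, 1; 1, 0]) ≤ distK (K1 α) F + α ^ 2 :=
  dist_ZFZ_le_general α F
end
end

section
/- Let α∈(−1,1), Z = [[0,1],[1,0]], A₁ = [[1,−α],[0,1]], and R_α = (1+α²)^{−1/2}·[[1,−α],[α,1]]. Then R_α ∈ SO(2) and |R_α Z A₁ Z − A₁| ≤ α², where |·| is the Frobenius norm on ℝ^{2×2}. -/
/-!
Formalization framework for "Energy scaling and branched microstructures in a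
model for shape-memory alloys with SO(2) invariance" (Chan–Conti).

Deformations are maps `u : ℝ² → ℝ²` (with `ℝ²` the Euclidean plane).  The
gradient `Du` is the 2×2 matrix of partial derivatives, matrices carry the
Frobenius norm, and the total variation `|D²u|(ω)` of the (matrix-valued)
gradient is defined by duality against C¹ compactly supported test fields.
The admissible class consists of (Lipschitz) deformations whose gradient has
bounded variation and which agree with the identity on `∂Ω`.
-/

open MeasureTheory Set Metric Topology

noncomputable section

attribute [local instance] Matrix.frobeniusNormedAddCommGroup

/-! With `s = √(1 + α²)`, the residual `R_α Z A₁ Z - A₁` is `[[s - 1, α(1 - 1/s)], [0, 1/s - 1]]`,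
and since `s² = 1 + α²` its squared Frobenius norm is `(s - 1)² + s²(1 - 1/s)² = 2(s - 1)²`.
As `s ≤ 1 + α²/2`, the norm is at most `α²/√2`. -/

theorem frobenius_norm_sq_fin_two (a b c d : ℝ) :
    ‖(!![a, b; c, d] : M2)‖ ^ 2 = a ^ 2 + b ^ 2 + c ^ 2 + d ^ 2 := by
  rw [Matrix.frobenius_norm_def, ← Real.sqrt_eq_rpow, Real.sq_sqrt (by positivity)]
  simp [Fin.sum_univ_two, Real.norm_eq_abs, sq_abs, add_assoc]

theorem rotation_mem_SO2 {a b : ℝ} (h : a ^ 2 + b ^ 2 = 1) : !![a, -b; b, a] ∈ SO2 := by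
  refine ⟨?_, by rw [Matrix.det_fin_two_of]; linear_combination h⟩
  ext i j
  fin_cases i <;> fin_cases j <;> simp [Matrix.mul_apply, mul_comm] <;> linear_combination h

theorem smul_rotation_eq (c a b : ℝ) :
    (c • !![a, -b; b, a] : M2) = !![c * a, -(c * b); c * b, c * a] := by
  simp only [Matrix.smul_of, Matrix.smul_cons, smul_eq_mul, Matrix.smul_empty, mul_neg]

theorem swap_conj_shear (α : ℝ) :
    (!![0, 1; 1, 0] * !![1, -α; 0, 1] * !![0, 1; 1, 0] : M2) = !![1, 0; -α, 1] := by
  simp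

theorem inv_smul_rotation_mul_conj_sub (α s : ℝ) :
    (s⁻¹ • !![1, -α; α, 1] : M2) * (!![0, 1; 1, 0] * !![1, -α; 0, 1] * !![0, 1; 1, 0]) -
      !![1, -α; 0, 1] = !![s⁻¹ * (1 + α ^ 2) - 1, α * (1 - s⁻¹); 0, s⁻¹ - 1] := by
  rw [swap_conj_shear]
  ext i j
  fin_cases i <;> fin_cases j <;> simp <;> ring

theorem norm_sq_inv_smul_rotation_mul_conj_sub {α s : ℝ} (hs : s ≠ 0)
    (hs2 : s ^ 2 = 1 + α ^ 2) :
    ‖(s⁻¹ • !![1, -α; α, 1] : M2) * (!![0, 1; 1, 0] * !![1, -α; 0, 1] * !![0, 1; 1, 0]) -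
      !![1, -α; 0, 1]‖ ^ 2 = 2 * (s - 1) ^ 2 := by
  have h_diag : s⁻¹ * (1 + α ^ 2) = s := by rw [← hs2]; field_simp
  rw [inv_smul_rotation_mul_conj_sub, frobenius_norm_sq_fin_two, h_diag]
  field_simp
  linear_combination -(s - 1) ^ 2 * hs2

theorem sqrt_one_add_sq_le (α : ℝ) : √(1 + α ^ 2) ≤ 1 + α ^ 2 / 2 :=
  Real.sqrt_le_iff.mpr ⟨by positivity, by nlinarith [sq_nonneg (α ^ 2)]⟩

theorem rotation_conjugation_estimate_general (α : ℝ) :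
    ((Real.sqrt (1 + α ^ 2))⁻¹ • !![1, -α; α, 1] : M2) ∈ SO2 ∧
    ‖((Real.sqrt (1 + α ^ 2))⁻¹ • !![1, -α; α, 1] : M2) *
        (!![0, 1; 1, 0] * !![1, -α; 0, 1] * !![0, 1; 1, 0]) - !![1, -α; 0, 1]‖ ≤ α ^ 2 := by
  set s := √(1 + α ^ 2)
  have hs2 : s ^ 2 = 1 + α ^ 2 := Real.sq_sqrt (by positivity)
  have hs1 : 1 ≤ s := Real.one_le_sqrt.mpr (by nlinarith [sq_nonneg α])
  have hs : s ≠ 0 := by positivity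
  constructor
  · rw [smul_rotation_eq]
    exact rotation_mem_SO2 (by field_simp; linear_combination -hs2)
  · rw [← pow_le_pow_iff_left₀ (norm_nonneg _) (sq_nonneg α) two_ne_zero,
      norm_sq_inv_smul_rotation_mul_conj_sub hs hs2]
    nlinarith [sqrt_one_add_sq_le α, sq_nonneg α]

/-- The rotation `R_α = (1+α²)^{-1/2}[[1,-α],[α,1]]` belongs to `SO(2)` and
satisfies `|R_α Z A₁ Z - A₁| ≤ α²` for `Z = [[0,1],[1,0]]`, `A₁ = [[1,-α],[0,1]]`. -/
theorem rotation_conjugation_estimate (α : ℝ) (hα : α ∈ Ioo (-1:ℝ) 1) :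
    ((Real.sqrt (1 + α ^ 2))⁻¹ • !![1, -α; α, 1] : M2) ∈ SO2 ∧
    ‖((Real.sqrt (1 + α ^ 2))⁻¹ • !![1, -α; α, 1] : M2) *
        (!![0, 1; 1, 0] * !![1, -α; 0, 1] * !![0, 1; 1, 0]) - !![1, -α; 0, 1]‖ ≤ α ^ 2 :=
  rotation_conjugation_estimate_general α
end
end

section
/- There is a universal constant c_*>0 (one may take c_* = 1/16) with the following property. Let L,H>0, Ω = (0,L)×(0,H), α∈(0,1), j∈{1,2}, λ>0, and let Q ⊂ Ω̄ be a closed square of side length λ having at least two of its sides contained in ∂Ω. Then for every F∈K_j and every a∈ℝ², one has c_*·α·λ² ≤ ∫_{∂Q∩∂Ω} |x − Fx − a| dH¹(x), where H¹ is the one-dimensional Hausdorff measure. -/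
/-!
Formalization framework for "Energy scaling and branched microstructures in a
model for shape-memory alloys with SO(2) invariance" (Chan–Conti).

Deformations are maps `u : ℝ² → ℝ²` (with `ℝ²` the Euclidean plane).  The
gradient `Du` is the 2×2 matrix of partial derivatives, matrices carry the
Frobenius norm, and the total variation `|D²u|(ω)` of the (matrix-valued)
gradient is defined by duality against C¹ compactly supported test fields.
The admissible class consists of (Lipschitz) deformations whose gradient has
bounded variation and which agree with the identity on `∂Ω`.
-/

open MeasureTheory Set Metric Topology

noncomputable section

attribute [local instance] Matrix.frobeniusNormedAddCommGroup

/-- The closed square `[a,a+λ]×[b,b+λ]`. -/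
def csq (a b lam : ℝ) : Set E2 := {x | x 0 ∈ Icc a (a + lam) ∧ x 1 ∈ Icc b (b + lam)}

/-- The four sides of the closed square `[a,a+λ]×[b,b+λ]`:
left, right, bottom, top. -/
def sqSide (a b lam : ℝ) : Fin 4 → Set E2
  | 0 => {x | x 0 = a ∧ x 1 ∈ Icc b (b + lam)}
  | 1 => {x | x 0 = a + lam ∧ x 1 ∈ Icc b (b + lam)}
  | 2 => {x | x 1 = b ∧ x 0 ∈ Icc a (a + lam)}
  | 3 => {x | x 1 = b + lam ∧ x 0 ∈ Icc a (a + lam)}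

/-!
Write `A = I - F`, so that the integrand is `|A x - a|`. Along a side of `Q` with direction `e`
it is `|t • A e + w|` for `t ∈ [0, λ]`, whose integral is at least `λ² |A e| / 16`; along two
opposite sides with direction `e` the offsets `w` differ by `λ • A f` (`f` the other direction),
so the two integrals add up to at least `λ² |A f|`. Hence any two distinct sides contribute at
least `λ² (|A e₀| + |A e₁|) / 16`. Finally, for `F ∈ K_j` one has `|I - F|² ≥ α² / 2` in the
Frobenius norm, whence `|A e₀| + |A e₁| ≥ α / 2`.
-/

theorem mul_sub_le_setIntegral_Icc {φ : ℝ → ℝ} {a b x y c : ℝ}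
    (hφ : IntegrableOn φ (Icc a b)) (hφ0 : ∀ t ∈ Icc a b, 0 ≤ φ t) (hxy : x ≤ y)
    (hsub : Icc x y ⊆ Icc a b) (hc : ∀ t ∈ Icc x y, c ≤ φ t) :
    c * (y - x) ≤ ∫ t in Icc a b, φ t := by
  calc c * (y - x) ≤ ∫ t in Icc x y, φ t := by
        simpa [Real.volume_real_Icc_of_le hxy] using
          setIntegral_ge_of_const_le_real measurableSet_Icc (by simp) hc (hφ.mono_set hsub)
    _ ≤ ∫ t in Icc a b, φ t :=
        setIntegral_mono_set hφ ((ae_restrict_iff' measurableSet_Icc).2 (.of_forall hφ0))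
          hsub.eventuallyLE

theorem setIntegral_add_setIntegral_le {X : Type*} [MeasurableSpace X] {μ : Measure X}
    {g : X → ℝ} {S S' T : Set X} (hg : 0 ≤ g) (hT : IntegrableOn g T μ) (hS : S ⊆ T)
    (hS' : S' ⊆ T) (hd : AEDisjoint μ S S') (hm : NullMeasurableSet S' μ) :
    (∫ x in S, g x ∂μ) + ∫ x in S', g x ∂μ ≤ ∫ x in T, g x ∂μ := by
  rw [← setIntegral_union₀ hd hm (hT.mono_set hS) (hT.mono_set hS')]
  exact setIntegral_mono_set hT (.of_forall hg) (union_subset hS hS').eventuallyLE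

section AffineOnInterval

variable {V : Type*} [NormedAddCommGroup V] [NormedSpace ℝ V]

theorem integrableOn_norm_smul_add (v w : V) (a b : ℝ) :
    IntegrableOn (fun t : ℝ => ‖t • v + w‖) (Icc a b) :=
  (by fun_prop : Continuous fun t : ℝ => ‖t • v + w‖).integrableOn_Icc

/- If `‖s • v + w‖ < λ ‖v‖ / 4` for some `s` in the first quarter of `[0, λ]`, the triangle
inequality gives `‖t • v + w‖ ≥ λ ‖v‖ / 4` on the whole last quarter. -/
theorem sq_mul_norm_le_integral_norm_smul_add (v w : V) {lam : ℝ} (hlam : 0 ≤ lam) :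
    lam ^ 2 / 16 * ‖v‖ ≤ ∫ t in Icc 0 lam, ‖t • v + w‖ := by
  obtain ⟨x, hsub, hx⟩ : ∃ x, Icc x (x + lam / 4) ⊆ Icc 0 lam ∧
      ∀ t ∈ Icc x (x + lam / 4), lam / 4 * ‖v‖ ≤ ‖t • v + w‖ := by
    by_cases h : ∀ s ∈ Icc 0 (lam / 4), lam / 4 * ‖v‖ ≤ ‖s • v + w‖
    · exact ⟨0, Icc_subset_Icc le_rfl (by linarith), by simpa using h⟩
    push Not at h
    obtain ⟨s, ⟨hs0, hs⟩, hlt⟩ := h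
    refine ⟨3 * lam / 4, Icc_subset_Icc (by linarith) (by linarith), fun t ⟨ht, _⟩ => ?_⟩
    have hgap : lam / 2 * ‖v‖ ≤ (t - s) * ‖v‖ :=
      mul_le_mul_of_nonneg_right (by linarith) (norm_nonneg v)
    have htri : (t - s) * ‖v‖ ≤ ‖t • v + w‖ + ‖s • v + w‖ := by
      calc (t - s) * ‖v‖ = ‖(t • v + w) - (s • v + w)‖ := by
            rw [add_sub_add_right_eq_sub, ← sub_smul, norm_smul, Real.norm_of_nonneg (by linarith)]
        _ ≤ _ := norm_sub_le _ _
    linarith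
  calc lam ^ 2 / 16 * ‖v‖ = lam / 4 * ‖v‖ * (x + lam / 4 - x) := by ring
    _ ≤ _ := mul_sub_le_setIntegral_Icc (integrableOn_norm_smul_add v w _ _)
        (fun _ _ => norm_nonneg _) (by linarith) hsub hx

theorem mul_norm_sub_le_integral_add_integral (v w w' : V) {lam : ℝ} (hlam : 0 ≤ lam) :
    lam * ‖w - w'‖ ≤ (∫ t in Icc 0 lam, ‖t • v + w‖) + ∫ t in Icc 0 lam, ‖t • v + w'‖ := by
  have hw := integrableOn_norm_smul_add v w 0 lam
  have hw' := integrableOn_norm_smul_add v w' 0 lam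
  rw [← integral_add hw hw']
  calc lam * ‖w - w'‖ = ‖w - w'‖ * (lam - 0) := by ring
    _ ≤ _ := mul_sub_le_setIntegral_Icc (hw.add hw')
        (fun _ _ => add_nonneg (norm_nonneg _) (norm_nonneg _)) hlam le_rfl
        fun t _ => by simpa using norm_sub_le (t • v + w) (t • v + w')

end AffineOnInterval

section IsometricImage

variable {E V : Type*} [MetricSpace E] [MeasurableSpace E] [BorelSpace E]
  [NormedAddCommGroup V] {f : ℝ → E}

theorem hausdorffMeasure_restrict_image_isometry (hf : Isometry f) (s : Set ℝ) :
    (μH[1] : Measure E).restrict (f '' s) = (volume.restrict s).map f := by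
  rw [← Measure.restrict_restrict_of_subset (image_subset_range f s),
    ← hf.map_hausdorffMeasure (Or.inl zero_le_one), hausdorffMeasure_real,
    hf.isClosedEmbedding.measurableEmbedding.restrict_map, preimage_image_eq s hf.injective]

theorem integrableOn_image_isometry_iff (hf : Isometry f) (s : Set ℝ) (g : E → V) :
    IntegrableOn g (f '' s) μH[1] ↔ IntegrableOn (g ∘ f) s := by
  rw [IntegrableOn, hausdorffMeasure_restrict_image_isometry hf,
    hf.isClosedEmbedding.measurableEmbedding.integrable_map_iff, IntegrableOn]

theorem setIntegral_image_isometry [NormedSpace ℝ V] (hf : Isometry f) (s : Set ℝ) (g : E → V) :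
    ∫ x in f '' s, g x ∂μH[1] = ∫ t in s, g (f t) := by
  rw [hausdorffMeasure_restrict_image_isometry hf,
    hf.isClosedEmbedding.measurableEmbedding.integral_map]

end IsometricImage

section Segment

variable {E V : Type*} [NormedAddCommGroup E] [NormedSpace ℝ E]

theorem isometry_add_smul (p : E) {e : E} (he : ‖e‖ = 1) : Isometry fun t : ℝ => p + t • e :=
  Isometry.of_dist_eq fun t s => by
    rw [dist_eq_norm, add_sub_add_left_eq_sub, ← sub_smul, norm_smul, he, mul_one,
      Real.dist_eq, Real.norm_eq_abs]

variable [MeasurableSpace E] [BorelSpace E] [NormedAddCommGroup V] [NormedSpace ℝ V]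

theorem setIntegral_norm_sub_image_add_smul (A : E →ₗ[ℝ] V) (c : V) (p : E) {e : E}
    (he : ‖e‖ = 1) (s : Set ℝ) :
    ∫ x in (fun t : ℝ => p + t • e) '' s, ‖A x - c‖ ∂μH[1]
      = ∫ t in s, ‖t • A e + (A p - c)‖ := by
  rw [setIntegral_image_isometry (isometry_add_smul p he)]
  simp only [map_add, map_smul, add_comm (A p), add_sub_assoc]

end Segment

section EnergyWells

theorem mulV_eq_toEuclideanLin (F : M2) : mulV F = Matrix.toEuclideanLin F := rfl

theorem SO2_entries {R : M2} (hR : R ∈ SO2) :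
    R 1 1 = R 0 0 ∧ R 1 0 = -R 0 1 ∧ R 0 0 ^ 2 + R 0 1 ^ 2 = 1 := by
  obtain ⟨horth, hdet⟩ := hR
  have e00 := congrFun (congrFun horth 0) 0
  have e01 := congrFun (congrFun horth 0) 1
  simp only [Matrix.mul_apply, Matrix.transpose_apply, Fin.sum_univ_two, Matrix.one_apply_eq,
    Matrix.one_apply_ne zero_ne_one] at e00 e01
  rw [Matrix.det_fin_two] at hdet
  refine ⟨?_, ?_, by linear_combination e00⟩
  · linear_combination (-R 1 1) * e00 + R 0 0 * hdet + R 0 1 * e01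
  · linear_combination R 0 0 * e01 - R 1 0 * e00 - R 0 1 * hdet

theorem half_sq_le_sum_sq_one_sub_of_mem_Kj {j : ℕ} {α : ℝ} (hα : 0 ≤ α) {F : M2}
    (hF : F ∈ Kj j α) : α ^ 2 / 2 ≤ ∑ i, ∑ k, ((1 - F) i k) ^ 2 := by
  unfold Kj K1 K2 at hF
  split_ifs at hF <;>
  rcases hF with ⟨R, hR, rfl⟩ | ⟨R, hR, rfl⟩ <;>
  obtain ⟨h11, h10, hcs⟩ := SO2_entries hR <;>
  simp only [Fin.sum_univ_two, Matrix.sub_apply, Matrix.mul_apply, Matrix.one_apply_eq,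
    Matrix.one_apply_ne zero_ne_one, Matrix.one_apply_ne one_ne_zero, Matrix.of_apply,
    Matrix.cons_val', Matrix.cons_val_zero, Matrix.cons_val_one, Matrix.cons_val_fin_one, h10, h11]
  · nlinarith [sq_nonneg (α - 2 * R 0 1), sq_nonneg (1 - R 0 0)]
  · nlinarith [sq_nonneg (α + 2 * R 0 1), sq_nonneg (1 - R 0 0)]
  · nlinarith [sq_nonneg (2 * R 0 0 - 2 + α), sq_nonneg (R 0 1)]
  · nlinarith [sq_nonneg (2 * R 0 0 - 2 - α), sq_nonneg (R 0 1)]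

theorem norm_sq_single_sub_mulV (F : M2) (k : Fin 2) :
    ‖EuclideanSpace.single k 1 - mulV F (EuclideanSpace.single k 1)‖ ^ 2
      = ∑ i, ((1 - F) i k) ^ 2 := by
  rw [EuclideanSpace.real_norm_sq_eq]
  congr 1; ext i
  simp [mulV_eq_toEuclideanLin, Matrix.toLpLin_apply, Matrix.one_apply, eq_comm]

theorem half_le_norm_add_norm_of_mem_Kj {j : ℕ} {α : ℝ} (hα : 0 ≤ α) {F : M2}
    (hF : F ∈ Kj j α) :
    α / 2 ≤ ‖EuclideanSpace.single 0 1 - mulV F (EuclideanSpace.single 0 1)‖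
      + ‖EuclideanSpace.single 1 1 - mulV F (EuclideanSpace.single 1 1)‖ := by
  have h := half_sq_le_sum_sq_one_sub_of_mem_Kj hα hF
  rw [Finset.sum_comm, Fin.sum_univ_two, ← norm_sq_single_sub_mulV,
    ← norm_sq_single_sub_mulV] at h
  nlinarith [norm_nonneg (EuclideanSpace.single 0 1 - mulV F (EuclideanSpace.single 0 1)),
    norm_nonneg (EuclideanSpace.single 1 1 - mulV F (EuclideanSpace.single 1 1))]

end EnergyWells

section SquareSides

def sqSideStart (a b lam : ℝ) : Fin 4 → E2
  | 0 => !₂[a, b]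
  | 1 => !₂[a + lam, b]
  | 2 => !₂[a, b]
  | 3 => !₂[a, b + lam]

def sqSideDir : Fin 4 → E2
  | 0 | 1 => EuclideanSpace.single 1 1
  | 2 | 3 => EuclideanSpace.single 0 1

theorem norm_sqSideDir (i : Fin 4) : ‖sqSideDir i‖ = 1 := by
  fin_cases i <;> simp [sqSideDir]

theorem sqSide_eq_image (a b lam : ℝ) (i : Fin 4) :
    sqSide a b lam i = (fun t => sqSideStart a b lam i + t • sqSideDir i) '' Icc 0 lam := by
  ext x
  constructor
  · fin_cases i <;> rintro ⟨hx, hy, hy'⟩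
    · refine ⟨x 1 - b, ⟨by linarith, by linarith⟩, ?_⟩
      ext k; fin_cases k <;> simp [sqSideStart, sqSideDir, hx]
    · refine ⟨x 1 - b, ⟨by linarith, by linarith⟩, ?_⟩
      ext k; fin_cases k <;> simp [sqSideStart, sqSideDir, hx]
    · refine ⟨x 0 - a, ⟨by linarith, by linarith⟩, ?_⟩
      ext k; fin_cases k <;> simp [sqSideStart, sqSideDir, hx]
    · refine ⟨x 0 - a, ⟨by linarith, by linarith⟩, ?_⟩
      ext k; fin_cases k <;> simp [sqSideStart, sqSideDir, hx]
  · rintro ⟨t, ⟨ht0, ht⟩, rfl⟩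
    fin_cases i <;> simp [sqSide, sqSideStart, sqSideDir, ht0, ht]

theorem measurableSet_sqSide (a b lam : ℝ) (i : Fin 4) : MeasurableSet (sqSide a b lam i) := by
  rw [sqSide_eq_image]
  exact (isometry_add_smul _ (norm_sqSideDir i)).isClosedEmbedding.measurableEmbedding
    |>.measurableSet_image.2 measurableSet_Icc

theorem frontier_csq {a b lam : ℝ} (hlam : 0 ≤ lam) :
    frontier (csq a b lam) = ⋃ i, sqSide a b lam i := by
  let φ : E2 ≃ₜ ℝ × ℝ :=
    (EuclideanSpace.equiv (Fin 2) ℝ).toHomeomorph.trans (Homeomorph.piFinTwo fun _ => ℝ)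
  have hcsq : csq a b lam = φ ⁻¹' (Icc a (a + lam) ×ˢ Icc b (b + lam)) := rfl
  rw [hcsq, ← φ.preimage_frontier, frontier_prod_eq, closure_Icc, closure_Icc,
    frontier_Icc (by linarith), frontier_Icc (by linarith)]
  ext x
  simp only [preimage_union, mem_union, mem_preimage, Homeomorph.trans_apply,
    ContinuousLinearEquiv.coe_toHomeomorph, Homeomorph.piFinTwo_apply,
    PiLp.continuousLinearEquiv_apply, mem_prod, mem_Icc, mem_insert_iff, mem_singleton_iff, sqSide,
    mem_iUnion, Fin.exists_fin_succ, mem_ofPred_eq, Fin.succ_zero_eq_one, Fin.succ_one_eq_two,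
    Fin.reduceSucc, IsEmpty.exists_iff, or_false, φ]
  tauto

theorem sqSide_inter_subsingleton {a b lam : ℝ} (hlam : 0 < lam) {i k : Fin 4} (hik : i ≠ k) :
    (sqSide a b lam i ∩ sqSide a b lam k).Subsingleton := by
  rintro x ⟨hxi, hxk⟩ y ⟨hyi, hyk⟩
  fin_cases i <;> fin_cases k <;> simp only [sqSide, mem_ofPred_eq, mem_Icc] at * <;>
    first
    | exact absurd rfl hik
    | exact PiLp.ext (Fin.forall_fin_two.2 ⟨by linarith, by linarith⟩)

theorem aedisjoint_sqSide {a b lam : ℝ} (hlam : 0 < lam) {i k : Fin 4} (hik : i ≠ k) :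
    AEDisjoint μH[1] (sqSide a b lam i) (sqSide a b lam k) :=
  have := Measure.nullSingletonClass_hausdorff E2 one_pos
  (sqSide_inter_subsingleton hlam hik).measure_zero _

variable {V : Type*} [NormedAddCommGroup V] [NormedSpace ℝ V] (A : E2 →ₗ[ℝ] V) (c : V)
  {a b lam : ℝ}

theorem integral_sqSide (i : Fin 4) :
    ∫ x in sqSide a b lam i, ‖A x - c‖ ∂μH[1]
      = ∫ t in Icc 0 lam, ‖t • A (sqSideDir i) + (A (sqSideStart a b lam i) - c)‖ := by
  rw [sqSide_eq_image, setIntegral_norm_sub_image_add_smul A c _ (norm_sqSideDir i)]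

theorem integrableOn_sqSide (i : Fin 4) :
    IntegrableOn (fun x => ‖A x - c‖) (sqSide a b lam i) μH[1] := by
  rw [sqSide_eq_image, integrableOn_image_isometry_iff (isometry_add_smul _ (norm_sqSideDir i))]
  refine (integrableOn_norm_smul_add (A (sqSideDir i)) (A (sqSideStart a b lam i) - c) 0 lam
    ).congr_fun (fun t _ => ?_) measurableSet_Icc
  simp only [Function.comp_apply, map_add, map_smul, add_comm (A _), add_sub_assoc]

theorem le_integral_sqSide (hlam : 0 ≤ lam) (i : Fin 4) :
    lam ^ 2 / 16 * ‖A (sqSideDir i)‖ ≤ ∫ x in sqSide a b lam i, ‖A x - c‖ ∂μH[1] := by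
  rw [integral_sqSide]
  exact sq_mul_norm_le_integral_norm_smul_add _ _ hlam

theorem le_integral_sqSide_add_integral_sqSide_of_parallel (hlam : 0 ≤ lam) {i k : Fin 4}
    (hdir : sqSideDir i = sqSideDir k) {f : E2}
    (hstart : sqSideStart a b lam k - sqSideStart a b lam i = lam • f) :
    lam ^ 2 * ‖A f‖ ≤
      (∫ x in sqSide a b lam i, ‖A x - c‖ ∂μH[1]) + ∫ x in sqSide a b lam k, ‖A x - c‖ ∂μH[1] := by
  rw [integral_sqSide, integral_sqSide, hdir]
  refine le_of_eq_of_le ?_ (mul_norm_sub_le_integral_add_integral _ _ _ hlam)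
  rw [sub_sub_sub_cancel_right, norm_sub_rev, ← map_sub, hstart, map_smul, norm_smul,
    Real.norm_of_nonneg hlam]
  ring

theorem le_integral_sqSide_add_integral_sqSide (hlam : 0 ≤ lam) {i k : Fin 4} (hik : i ≠ k) :
    lam ^ 2 / 16 * (‖A (EuclideanSpace.single 0 1)‖ + ‖A (EuclideanSpace.single 1 1)‖) ≤
      (∫ x in sqSide a b lam i, ‖A x - c‖ ∂μH[1]) + ∫ x in sqSide a b lam k, ‖A x - c‖ ∂μH[1] := by
  have h0 := le_integral_sqSide A c (a := a) (b := b) hlam 0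
  have h1 := le_integral_sqSide A c (a := a) (b := b) hlam 1
  have h2 := le_integral_sqSide A c (a := a) (b := b) hlam 2
  have h3 := le_integral_sqSide A c (a := a) (b := b) hlam 3
  simp only [sqSideDir] at h0 h1 h2 h3
  have h01 := le_integral_sqSide_add_integral_sqSide_of_parallel A c (a := a) (b := b)
    (i := 0) (k := 1) hlam rfl (f := EuclideanSpace.single 0 1)
    (by ext j; fin_cases j <;> simp [sqSideStart])
  have h23 := le_integral_sqSide_add_integral_sqSide_of_parallel A c (a := a) (b := b)
    (i := 2) (k := 3) hlam rfl (f := EuclideanSpace.single 1 1)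
    (by ext j; fin_cases j <;> simp [sqSideStart])
  have n0 : 0 ≤ lam ^ 2 * ‖A (EuclideanSpace.single 0 1)‖ := by positivity
  have n1 : 0 ≤ lam ^ 2 * ‖A (EuclideanSpace.single 1 1)‖ := by positivity
  have hcases : ∀ m : Fin 4, m = 0 ∨ m = 1 ∨ m = 2 ∨ m = 3 := by decide
  rcases hcases i with rfl | rfl | rfl | rfl <;> rcases hcases k with rfl | rfl | rfl | rfl <;>
    first | exact absurd rfl hik | linarith

end SquareSides

/-- Estimate (3.5): if the closed square `Q ⊆ Ω̄` of side `λ` has at least two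
sides contained in `∂Ω`, then for every `F ∈ K_j` and `a ∈ ℝ²` one has
`c_*αλ² ≤ ∫_{∂Q∩∂Ω} |x - Fx - a| dH¹` (one may take `c_* = 1/16`). -/
theorem boundary_affine_incompatibility :
    ∃ cstar : ℝ, 0 < cstar ∧
      ∀ L H α lam a b : ℝ, ∀ j : ℕ, 0 < L → 0 < H → α ∈ Ioo (0:ℝ) 1 →
        (j = 1 ∨ j = 2) → 0 < lam →
        csq a b lam ⊆ closure (Omg L H) →
        (∃ i k : Fin 4, i ≠ k ∧ sqSide a b lam i ⊆ frontier (Omg L H) ∧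
          sqSide a b lam k ⊆ frontier (Omg L H)) →
        ∀ F ∈ Kj j α, ∀ av : E2,
          cstar * α * lam ^ 2 ≤
            ∫ x in frontier (csq a b lam) ∩ frontier (Omg L H),
              ‖x - mulV F x - av‖ ∂(μH[1]) := by
  refine ⟨1 / 32, by norm_num, ?_⟩
  rintro L H α lam a b j - - ⟨hα, -⟩ - hlam - ⟨i, k, hik, hi, hk⟩ F hF av
  let A : E2 →ₗ[ℝ] E2 := LinearMap.id - Matrix.toEuclideanLin F
  change _ ≤ ∫ x in _, ‖A x - av‖ ∂μH[1]
  have hsides : ∀ m, sqSide a b lam m ⊆ frontier (Omg L H) →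
      sqSide a b lam m ⊆ frontier (csq a b lam) ∩ frontier (Omg L H) := fun m hm =>
    subset_inter ((frontier_csq hlam.le).symm ▸ subset_iUnion _ m) hm
  have hint : IntegrableOn (fun x => ‖A x - av‖)
      (frontier (csq a b lam) ∩ frontier (Omg L H)) μH[1] :=
    (integrableOn_finite_iUnion.2 (integrableOn_sqSide A av)).mono_set
      ((frontier_csq hlam.le).subset.trans' inter_subset_left)
  have hK : α / 2 ≤ ‖A (EuclideanSpace.single 0 1)‖ + ‖A (EuclideanSpace.single 1 1)‖ :=
    half_le_norm_add_norm_of_mem_Kj hα.le hF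
  calc 1 / 32 * α * lam ^ 2 = lam ^ 2 / 16 * (α / 2) := by ring
    _ ≤ lam ^ 2 / 16 * (‖A (EuclideanSpace.single 0 1)‖ + ‖A (EuclideanSpace.single 1 1)‖) := by
        gcongr
    _ ≤ _ := le_integral_sqSide_add_integral_sqSide A av hlam.le hik
    _ ≤ _ := setIntegral_add_setIntegral_le (fun _ => norm_nonneg _) hint (hsides i hi)
        (hsides k hk) (aedisjoint_sqSide hlam hik)
        (measurableSet_sqSide a b lam k).nullMeasurableSet
end
end

section
/- There is a universal constant c_*>0 with the following property. Let α∈(0,1), λ>0, s,s'∈ℝ, and Q = (s',s'+λ)×(s,s+λ). Let F∈K₁ and a∈ℝ². If |F₂₁| < α/2, then c_*·α·λ³ ≤ ∫_Q |(x − Fx − a)·e₁| dx; if |F₂₁| ≥ α/2, then c_*·α·λ³ ≤ ∫_Q |(x − Fx − a)·e₂| dx. -/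
/-!
Formalization framework for "Energy scaling and branched microstructures in a
model for shape-memory alloys with SO(2) invariance" (Chan–Conti).

Deformations are maps `u : ℝ² → ℝ²` (with `ℝ²` the Euclidean plane).  The
gradient `Du` is the 2×2 matrix of partial derivatives, matrices carry the
Frobenius norm, and the total variation `|D²u|(ω)` of the (matrix-valued)
gradient is defined by duality against C¹ compactly supported test fields.
The admissible class consists of (Lipschitz) deformations whose gradient has
bounded variation and which agree with the identity on `∂Ω`.
-/

open MeasureTheory Set Metric Topology

noncomputable section

attribute [local instance] Matrix.frobeniusNormedAddCommGroup

/-! The integrand `(x - Fx - a)·eᵢ` is affine, `p x₁ + q x₂ + r`. An affine function `g` of slope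
`q` on an interval of length `ℓ` satisfies
`∫ |g| ≥ |∫_{right half} g - ∫_{left half} g| = |q| ℓ² / 4`, so by Fubini its absolute value
integrates over the square `Q` to at least `|q| λ³ / 4`, and likewise to at least `|p| λ³ / 4`.
For `F = R (Id ± α e₁ ⊗ e₂) ∈ K₁` the first column of `F` is a unit vector and
`F₁₂ + F₂₁ = ±α F₁₁`. If `|F₂₁| < α/2`, then `|F₁₁| ≥ 5/6`, so the `x₂`-slope `-F₁₂` of
`(x - Fx - a)·e₁` has size at least `α/3`; otherwise the `x₁`-slope `-F₂₁` of `(x - Fx - a)·e₂`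
has size at least `α/2`. Hence `c_* = 1/12` works. -/

lemma abs_mul_sq_div_four_le_integral_abs_affine (q r : ℝ) {a b : ℝ} (hab : a ≤ b) :
    |q| * (b - a) ^ 2 / 4 ≤ ∫ t in a..b, |q * t + r| := by
  set m := (a + b) / 2 with hm
  have ham : a ≤ m := by linarith
  have hmb : m ≤ b := by linarith
  have hg : Continuous fun t : ℝ => q * t + r := by fun_prop
  have integral_affine (u v : ℝ) :
      ∫ t in u..v, (q * t + r) = q * (v ^ 2 - u ^ 2) / 2 + r * (v - u) := by
    rw [intervalIntegral.integral_add ((continuous_const_mul q).intervalIntegrable _ _)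
        intervalIntegrable_const,
      intervalIntegral.integral_const_mul, integral_id, intervalIntegral.integral_const,
      smul_eq_mul]
    ring
  calc |q| * (b - a) ^ 2 / 4
      = |(∫ t in m..b, (q * t + r)) - ∫ t in a..m, (q * t + r)| := by
        rw [integral_affine, integral_affine, hm, ← abs_of_nonneg (sq_nonneg (b - a)),
          ← abs_mul, ← abs_of_pos (by norm_num : (0:ℝ) < 4), ← abs_div]
        ring_nf
    _ ≤ |∫ t in m..b, (q * t + r)| + |∫ t in a..m, (q * t + r)| := abs_sub _ _
    _ ≤ (∫ t in m..b, |q * t + r|) + ∫ t in a..m, |q * t + r| := by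
        gcongr
        · exact intervalIntegral.abs_integral_le_integral_abs hmb
        · exact intervalIntegral.abs_integral_le_integral_abs ham
    _ = ∫ t in a..b, |q * t + r| := by
        rw [add_comm, intervalIntegral.integral_add_adjacent_intervals] <;>
          exact (continuous_abs.comp hg).intervalIntegrable _ _

lemma setIntegral_coords_eq_setIntegral_prod (g : ℝ × ℝ → ℝ) (s t : Set ℝ) :
    ∫ x in {x : E2 | x 0 ∈ s ∧ x 1 ∈ t}, g (x 0, x 1) = ∫ z in s ×ˢ t, g z := by
  let e : E2 ≃ᵐ ℝ × ℝ :=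
    (MeasurableEquiv.toLp 2 (Fin 2 → ℝ)).symm.trans MeasurableEquiv.finTwoArrow
  have he : MeasurePreserving e volume volume :=
    (volume_preserving_finTwoArrow ℝ).comp
      (EuclideanSpace.volume_preserving_symm_measurableEquiv_toLp (Fin 2))
  rw [← he.setIntegral_preimage_emb e.measurableEmbedding]
  rfl

section AffineLowerBounds

variable (p q r : ℝ) {a b c d : ℝ}

lemma integrableOn_abs_affine_Ioo_prod_Ioo :
    IntegrableOn (fun z : ℝ × ℝ => |p * z.1 + q * z.2 + r|) (Ioo a b ×ˢ Ioo c d) :=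
  ((by fun_prop : Continuous fun z : ℝ × ℝ => |p * z.1 + q * z.2 + r|).continuousOn
    |>.integrableOn_compact (isCompact_Icc.prod isCompact_Icc)).mono_set
    (prod_mono Ioo_subset_Icc_self Ioo_subset_Icc_self)

lemma le_setIntegral_Ioo_prod_Ioo_abs_affine_of_snd (hab : a ≤ b) (hcd : c ≤ d) :
    |q| * (d - c) ^ 2 * (b - a) / 4 ≤
      ∫ z in Ioo a b ×ˢ Ioo c d, |p * z.1 + q * z.2 + r| := by
  have hint := integrableOn_abs_affine_Ioo_prod_Ioo p q r (a := a) (b := b) (c := c) (d := d)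
  rw [IntegrableOn, Measure.volume_eq_prod, ← Measure.prod_restrict] at hint
  rw [Measure.volume_eq_prod, ← Measure.prod_restrict, integral_prod _ hint]
  have inner (x : ℝ) : |q| * (d - c) ^ 2 / 4 ≤ ∫ y in Ioo c d, |p * x + q * y + r| := by
    rw [← integral_Ioc_eq_integral_Ioo, ← intervalIntegral.integral_of_le hcd]
    refine (abs_mul_sq_div_four_le_integral_abs_affine q (p * x + r) hcd).trans_eq ?_
    congr 1 with y
    ring_nf
  calc |q| * (d - c) ^ 2 * (b - a) / 4 = ∫ _ in Ioo a b, |q| * (d - c) ^ 2 / 4 := by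
        rw [setIntegral_const, Real.volume_real_Ioo_of_le hab, smul_eq_mul]; ring
    _ ≤ _ := setIntegral_mono_on (integrableOn_const measure_Ioo_lt_top.ne)
        hint.integral_prod_left measurableSet_Ioo fun x _ => inner x

lemma le_setIntegral_Ioo_prod_Ioo_abs_affine_of_fst (hab : a ≤ b) (hcd : c ≤ d) :
    |p| * (b - a) ^ 2 * (d - c) / 4 ≤
      ∫ z in Ioo a b ×ˢ Ioo c d, |p * z.1 + q * z.2 + r| := by
  rw [Measure.volume_eq_prod, ← setIntegral_prod_swap, ← Measure.volume_eq_prod]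
  refine (le_setIntegral_Ioo_prod_Ioo_abs_affine_of_snd q p r hcd hab).trans_eq ?_
  congr 1 with z
  simp only [Prod.fst_swap, Prod.snd_swap]
  ring_nf

variable (x₀ ℓ y₀ h : ℝ)

lemma le_setIntegral_rect_abs_affine_of_snd (hℓ : 0 ≤ ℓ) (hh : 0 ≤ h) :
    |q| * h ^ 2 * ℓ / 4 ≤ ∫ x in rect x₀ ℓ y₀ h, |p * x 0 + q * x 1 + r| := by
  have := le_setIntegral_Ioo_prod_Ioo_abs_affine_of_snd p q r
    (le_add_of_nonneg_right hℓ : x₀ ≤ x₀ + ℓ) (le_add_of_nonneg_right hh : y₀ ≤ y₀ + h)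
  rwa [add_sub_cancel_left, add_sub_cancel_left,
    ← setIntegral_coords_eq_setIntegral_prod (fun z => |p * z.1 + q * z.2 + r|)] at this

lemma le_setIntegral_rect_abs_affine_of_fst (hℓ : 0 ≤ ℓ) (hh : 0 ≤ h) :
    |p| * ℓ ^ 2 * h / 4 ≤ ∫ x in rect x₀ ℓ y₀ h, |p * x 0 + q * x 1 + r| := by
  have := le_setIntegral_Ioo_prod_Ioo_abs_affine_of_fst p q r
    (le_add_of_nonneg_right hℓ : x₀ ≤ x₀ + ℓ) (le_add_of_nonneg_right hh : y₀ ≤ y₀ + h)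
  rwa [add_sub_cancel_left, add_sub_cancel_left,
    ← setIntegral_coords_eq_setIntegral_prod (fun z => |p * z.1 + q * z.2 + r|)] at this

end AffineLowerBounds

lemma mulV_apply (F : M2) (x : E2) (i : Fin 2) : mulV F x i = F i 0 * x 0 + F i 1 * x 1 := by
  simp only [mulV, toE2, PiLp.toLp_apply, Matrix.mulVec, dotProduct, Fin.sum_univ_two]

lemma entries_of_mem_SO2 {R : M2} (hR : R ∈ SO2) :
    R 1 0 = -R 0 1 ∧ R 0 0 ^ 2 + R 1 0 ^ 2 = 1 := by
  obtain ⟨horth, hdet⟩ := hR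
  have e00 := congrFun (congrFun horth 0) 0
  have e01 := congrFun (congrFun horth 0) 1
  simp only [Matrix.mul_apply, Matrix.transpose_apply, Fin.sum_univ_two, Matrix.one_apply_eq,
    ne_eq, zero_ne_one, not_false_eq_true, Matrix.one_apply_ne] at e00 e01
  rw [Matrix.det_fin_two] at hdet
  have h10 : R 1 0 = -R 0 1 := by
    linear_combination R 0 0 * e01 - R 0 1 * hdet - R 1 0 * e00
  exact ⟨h10, by rw [h10]; linear_combination e00⟩

lemma entries_of_mem_K1 {α : ℝ} (hα : 0 ≤ α) {F : M2} (hF : F ∈ K1 α) :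
    F 0 0 ^ 2 + F 1 0 ^ 2 = 1 ∧ |F 0 1 + F 1 0| = α * |F 0 0| := by
  obtain ⟨R, hR, β, hβ, rfl⟩ : ∃ R ∈ SO2, ∃ β : ℝ, |β| = α ∧ R * !![1, β; 0, 1] = F := by
    rcases hF with ⟨R, hR, rfl⟩ | ⟨R, hR, rfl⟩
    · exact ⟨R, hR, -α, by rw [abs_neg, abs_of_nonneg hα], rfl⟩
    · exact ⟨R, hR, α, abs_of_nonneg hα, rfl⟩
  obtain ⟨h10, hnorm⟩ := entries_of_mem_SO2 hR
  simp only [Matrix.mul_apply, Fin.sum_univ_two, Matrix.of_apply, Matrix.cons_val',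
    Matrix.cons_val_zero, Matrix.cons_val_one, Matrix.cons_val_fin_one]
  refine ⟨by simpa using hnorm, ?_⟩
  rw [h10, ← hβ, ← abs_mul]
  ring_nf

lemma div_three_le_abs_apply_zero_one_of_mem_K1 {α : ℝ} (hα₀ : 0 ≤ α) (hα₁ : α ≤ 1) {F : M2}
    (hF : F ∈ K1 α) (h10 : |F 1 0| < α / 2) : α / 3 ≤ |F 0 1| := by
  obtain ⟨hnorm, hsum⟩ := entries_of_mem_K1 hα₀ hF
  have h00 : 5 / 6 ≤ |F 0 0| := by
    nlinarith [sq_abs (F 0 0), sq_abs (F 1 0), abs_nonneg (F 0 0), abs_nonneg (F 1 0)]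
  calc α / 3 ≤ α * |F 0 0| - |F 1 0| := by nlinarith
    _ = |F 0 1 + F 1 0| - |F 1 0| := by rw [hsum]
    _ ≤ |F 0 1| := by linarith [abs_add_le (F 0 1) (F 1 0)]

/-- Estimate (3.14): for `Q = (s',s'+λ)×(s,s+λ)`, `F ∈ K₁` and `a ∈ ℝ²`, if
`|F₂₁| < α/2` then `c_*αλ³ ≤ ∫_Q |(x - Fx - a)·e₁|`, and if `|F₂₁| ≥ α/2` then
`c_*αλ³ ≤ ∫_Q |(x - Fx - a)·e₂|`. -/
theorem affine_boundary_incompatibility_cases :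
    ∃ cstar : ℝ, 0 < cstar ∧
      ∀ α lam s s' : ℝ, α ∈ Ioo (0:ℝ) 1 → 0 < lam →
        ∀ F ∈ K1 α, ∀ a : E2,
          (|F 1 0| < α / 2 →
            cstar * α * lam ^ 3 ≤ ∫ x in rect s' lam s lam, |x 0 - mulV F x 0 - a 0|) ∧
          (α / 2 ≤ |F 1 0| →
            cstar * α * lam ^ 3 ≤ ∫ x in rect s' lam s lam, |x 1 - mulV F x 1 - a 1|) := by
  refine ⟨1 / 12, by norm_num, ?_⟩
  rintro α lam s s' ⟨hα₀, hα₁⟩ hlam F hF a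
  have hlam3 : 0 ≤ lam ^ 3 := by positivity
  constructor
  · intro hsmall
    have h01 := div_three_le_abs_apply_zero_one_of_mem_K1 hα₀.le hα₁.le hF hsmall
    have h := le_setIntegral_rect_abs_affine_of_snd (1 - F 0 0) (-F 0 1) (-a 0) s' lam s lam
      hlam.le hlam.le
    simp_rw [mulV_apply]
    calc 1 / 12 * α * lam ^ 3 ≤ |-F 0 1| * lam ^ 2 * lam / 4 := by
          rw [abs_neg]; nlinarith
      _ ≤ _ := h.trans_eq (by congr 1 with x; ring_nf)
  · intro hlarge
    have h := le_setIntegral_rect_abs_affine_of_fst (-F 1 0) (1 - F 1 1) (-a 1) s' lam s lam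
      hlam.le hlam.le
    simp_rw [mulV_apply]
    calc 1 / 12 * α * lam ^ 3 ≤ |-F 1 0| * lam ^ 2 * lam / 4 := by
          rw [abs_neg]; nlinarith
      _ ≤ _ := h.trans_eq (by congr 1 with x; ring_nf)
end
end
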